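/- arXiv:math/9712257 — 8 statements merged into one kernel-verified Lean document; each statement's English description precedes it below -/
import Mathlib

section
/- Let s_1 < s_2 < \cdots < s_n be real numbers and let D be a nonnegative integer. Let \lambda be a sign vector of length n (a function from Fin n to {-,0,+}) which is not identically zero. Then there exists a real polynomial f with natDegree f \le D such that sign(f(s_i)) = \lambda_i for all i, if and only if m(\lambda) \le D. -/
open Finset

/-- `i < j` is an even gap of the sign vector `lam`: the entries at `i` and `j` are
nonzero of opposite sign, all entries strictly between are zero, and the number
`j - i - 1` of entries in between is even. -/
def IsEvenGap {n : ℕ} (lam : Fin n → SignType) (i j : Fin n) : Prop :=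
  i < j ∧ lam i ≠ 0 ∧ lam j ≠ 0 ∧ lam i = -lam j ∧
    (∀ r, i < r → r < j → lam r = 0) ∧ Even ((j : ℕ) - (i : ℕ) - 1)

/-- `i < j` is an odd gap of the sign vector `lam`: the entries at `i` and `j` are
nonzero of the same sign, all entries strictly between are zero, and the number
`j - i - 1` of entries in between is odd. -/
def IsOddGap {n : ℕ} (lam : Fin n → SignType) (i j : Fin n) : Prop :=
  i < j ∧ lam i ≠ 0 ∧ lam j ≠ 0 ∧ lam i = lam j ∧
    (∀ r, i < r → r < j → lam r = 0) ∧ Odd ((j : ℕ) - (i : ℕ) - 1)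

instance {n : ℕ} (lam : Fin n → SignType) (i j : Fin n) : Decidable (IsEvenGap lam i j) := by
  unfold IsEvenGap; infer_instance

instance {n : ℕ} (lam : Fin n → SignType) (i j : Fin n) : Decidable (IsOddGap lam i j) := by
  unfold IsOddGap; infer_instance

/-- `m(λ)`: the number of even gaps, plus the number of odd gaps, plus the number
of zero entries of the sign vector `λ`. -/
def mVal {n : ℕ} (lam : Fin n → SignType) : ℕ :=
  (univ.filter fun p : Fin n × Fin n => IsEvenGap lam p.1 p.2).card +
  (univ.filter fun p : Fin n × Fin n => IsOddGap lam p.1 p.2).card +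
  (univ.filter fun i : Fin n => lam i = 0).card

/-!
If `f` has the signs `λ` at `s₁ < ⋯ < sₙ`, it vanishes at every `sᵢ` with `λᵢ = 0`, and for
consecutive nonzero entries `λᵢ, λⱼ` the number of roots of `f` in `(sᵢ, sⱼ)`, counted with
multiplicity, has the parity of `sign f(sᵢ) · sign f(sⱼ)` (intermediate value theorem). This parity
disagrees with that of the `j - i - 1` forced roots exactly at the even and odd gaps, so each of them
costs one more root; as the gap intervals are disjoint, `m(λ) ≤ deg f`.

Conversely, take simple roots at the zeros of `λ` and one extra root just left of `sⱼ` for every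
even or odd gap `(i, j)`. By the same parity count the resulting polynomial of degree `m(λ)` has the
products `λᵢ λⱼ` over all consecutive nonzero entries, and a sign vector is determined up to a global
sign by its zeros and these products.
-/

open Polynomial

theorem Multiset.prod_map_ite_neg_one {α : Type*} (p : α → Prop) [DecidablePred p] (m : Multiset α) :
    (m.map fun x => if p x then (-1 : SignType) else 1).prod = (-1) ^ m.countP p := by
  induction m using Multiset.induction_on with
  | empty => simp
  | cons a m ih => by_cases h : p a <;> simp [h, ih, pow_succ, mul_comm]

theorem Polynomial.sign_eval_mul_sign_eval {f : ℝ[X]} {a b : ℝ} (hab : a < b)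
    (ha : f.eval a ≠ 0) (hb : f.eval b ≠ 0) :
    SignType.sign (f.eval a) * SignType.sign (f.eval b) =
      (-1) ^ f.roots.countP fun x => a < x ∧ x < b := by
  obtain ⟨q, hfq, -, hq⟩ := f.exists_prod_multiset_X_sub_C_mul
  have hq0 : ∀ x, q.eval x ≠ 0 := fun x hx => by
    have hf : f ≠ 0 := by rintro rfl; simp at ha
    have hqne : q ≠ 0 := right_ne_zero_of_mul (hfq ▸ hf)
    simpa [hq] using (mem_roots hqne).2 hx
  have hqab : 0 < q.eval a * q.eval b := by
    by_contra! h
    obtain ⟨x, -, hx⟩ : ∃ x ∈ Set.Icc a b, q.eval x = 0 := by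
      rcases mul_nonpos_iff.1 h with ⟨ha, hb⟩ | ⟨ha, hb⟩
      · exact intermediate_value_Icc' hab.le q.continuous.continuousOn ⟨hb, ha⟩
      · exact intermediate_value_Icc hab.le q.continuous.continuousOn ⟨ha, hb⟩
    exact hq0 x hx
  have hsign : ∀ x, SignType.sign (f.eval x) =
      (f.roots.map fun r => SignType.sign (x - r)).prod * SignType.sign (q.eval x) := by
    intro x
    conv_lhs => rw [← hfq]
    rw [eval_mul, eval_multiset_prod, sign_mul, ← signHom_apply, map_multiset_prod]
    simp [Multiset.map_map]
  have hroot : ∀ r ∈ f.roots, SignType.sign (a - r) * SignType.sign (b - r) =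
      if a < r ∧ r < b then -1 else 1 := by
    intro r hr
    have hra : r ≠ a := by rintro rfl; exact ha (isRoot_of_mem_roots hr)
    have hrb : r ≠ b := by rintro rfl; exact hb (isRoot_of_mem_roots hr)
    rcases lt_or_gt_of_ne hra with h | h
    · simp [h.not_gt, sign_pos (sub_pos.2 h), sign_pos (sub_pos.2 (h.trans hab))]
    rcases lt_or_gt_of_ne hrb with h' | h'
    · simp [h, h', sign_neg (sub_neg.2 h), sign_pos (sub_pos.2 h')]
    · simp [h'.not_gt, sign_neg (sub_neg.2 h), sign_neg (sub_neg.2 h')]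
  rw [hsign, hsign, mul_mul_mul_comm, ← sign_mul, sign_pos hqab, mul_one,
    ← Multiset.prod_map_mul, Multiset.map_congr rfl hroot, Multiset.prod_map_ite_neg_one]

theorem Finset.card_le_card_of_forall_mem_multiset {α : Type*} {Z : Finset α} {R : Multiset α}
    (hZ : ∀ z ∈ Z, z ∈ R) : #Z ≤ Multiset.card R := by
  classical
  exact (card_le_card fun z hz => Multiset.mem_toFinset.2 (hZ z hz)).trans
    (Multiset.toFinset_card_le R)

theorem Multiset.card_add_card_le_card_of_lt_countP {α ι : Type*} {R : Multiset α}
    {Z : Finset α} (hZ : ∀ z ∈ Z, z ∈ R) (G : Finset ι) (I : ι → α → Prop)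
    [∀ p, DecidablePred (I p)] (hdisj : ∀ p ∈ G, ∀ q ∈ G, p ≠ q → ∀ x, I p x → ¬I q x)
    (hcount : ∀ p ∈ G, #(Z.filter (I p)) < R.countP (I p)) :
    #G + #Z ≤ Multiset.card R := by
  classical
  induction G using Finset.induction_on generalizing R Z with
  | empty => simpa using card_le_card_of_forall_mem_multiset hZ
  | @insert p G hp ih =>
    have hout : ∀ q ∈ G, ∀ x, I q x → ¬I p x := fun q hq =>
      hdisj q (mem_insert_of_mem hq) p (mem_insert_self p G) (ne_of_mem_of_not_mem hq hp)
    have hrest := ih (R := R.filter (¬I p ·)) (Z := Z.filter (¬I p ·))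
      (fun z hz => Multiset.mem_filter.2 ⟨hZ z (mem_filter.1 hz).1, (mem_filter.1 hz).2⟩)
      (fun q hq q' hq' => hdisj q (mem_insert_of_mem hq) q' (mem_insert_of_mem hq'))
      (fun q hq => by
        rw [Finset.filter_filter, Multiset.countP_filter]
        simp_rw [and_iff_left_of_imp (hout q hq _), and_iff_right_of_imp (hout q hq _)]
        exact hcount q (mem_insert_of_mem hq))
    have hp' := hcount p (mem_insert_self p G)
    rw [card_insert_of_notMem hp, ← Finset.card_filter_add_card_filter_not (I p),
      Multiset.card_eq_countP_add_countP (I p) R, Multiset.countP_eq_card_filter (¬I p ·)]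
    omega

section SignVector

variable {n : ℕ} {lam : Fin n → SignType} {i j : Fin n}

def IsGap (lam : Fin n → SignType) (i j : Fin n) : Prop :=
  i < j ∧ lam i ≠ 0 ∧ lam j ≠ 0 ∧ ∀ r, i < r → r < j → lam r = 0

def countedGaps (lam : Fin n → SignType) : Finset (Fin n × Fin n) :=
  univ.filter fun p => IsEvenGap lam p.1 p.2 ∨ IsOddGap lam p.1 p.2

def zeroSet (lam : Fin n → SignType) : Finset (Fin n) :=
  univ.filter fun i => lam i = 0

theorem mVal_eq_card_countedGaps_add_card_zeroSet (lam : Fin n → SignType) :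
    mVal lam = #(countedGaps lam) + #(zeroSet lam) := by
  rw [mVal, countedGaps, filter_or, card_union_of_disjoint]
  · rfl
  exact disjoint_filter.2 fun p _ he ho => Nat.not_odd_iff_even.2 he.2.2.2.2.2 ho.2.2.2.2.2

theorem isGap_of_mem_countedGaps {p : Fin n × Fin n} (hp : p ∈ countedGaps lam) :
    IsGap lam p.1 p.2 := by
  rcases (mem_filter.1 hp).2 with ⟨h₁, h₂, h₃, -, h₅, -⟩ | ⟨h₁, h₂, h₃, -, h₅, -⟩ <;>
    exact ⟨h₁, h₂, h₃, h₅⟩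

namespace IsGap

theorem mul_eq (h : IsGap lam i j) :
    lam i * lam j = (-1) ^ ((j : ℕ) - i - 1 + if (i, j) ∈ countedGaps lam then 1 else 0) := by
  obtain ⟨hij, hi, hj, hzero⟩ := h
  have hmem : (i, j) ∈ countedGaps lam ↔
      lam i = -lam j ∧ Even ((j : ℕ) - i - 1) ∨ lam i = lam j ∧ Odd ((j : ℕ) - i - 1) := by
    rw [countedGaps, mem_filter]
    simp [IsEvenGap, IsOddGap, hij, hi, hj, eq_true hzero]
  simp only [hmem, pow_add]
  generalize (j : ℕ) - i - 1 = k
  revert hi hj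
  generalize lam i = a
  generalize lam j = b
  rcases Nat.even_or_odd k with hk | hk <;>
    simp only [hk, hk.neg_one_pow, Nat.not_odd_iff_even.2, Nat.not_even_iff_odd.2, and_true,
      and_false, or_false, false_or] <;> revert a b <;> decide

theorem fst_eq {i' : Fin n} (h : IsGap lam i j) (h' : IsGap lam i' j) : i = i' := by
  by_contra hne
  rcases lt_or_gt_of_ne hne with hlt | hlt
  · exact h'.2.1 (h.2.2.2 i' hlt h'.1)
  · exact h.2.1 (h'.2.2.2 i hlt h.1)

theorem le_fst_of_lt {i' j' : Fin n} (h : IsGap lam i j) (h' : IsGap lam i' j') (hj : j < j') :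
    j ≤ i' :=
  not_lt.1 fun hlt => h.2.2.1 (h'.2.2.2 j hlt hj)

theorem card_filter_zeroSet (h : IsGap lam i j) :
    #((zeroSet lam).filter fun r => i < r ∧ r < j) = (j : ℕ) - i - 1 := by
  rw [← Fin.card_Ioo]
  congr 1
  ext r
  simp only [zeroSet, mem_filter, mem_univ, true_and, mem_Ioo]
  exact ⟨And.right, fun hr => ⟨h.2.2.2 r hr.1 hr.2, hr⟩⟩

theorem lt_snd_and_snd_le_iff {p : Fin n × Fin n} (h : IsGap lam i j) (hp : IsGap lam p.1 p.2) :
    i < p.2 ∧ p.2 ≤ j ↔ p = (i, j) := by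
  refine ⟨fun ⟨hip, hpj⟩ => ?_, by rintro rfl; exact ⟨h.1, le_rfl⟩⟩
  obtain rfl : p.2 = j := hpj.eq_or_lt.resolve_right fun hlt => hp.2.2.1 (h.2.2.2 _ hip hlt)
  exact Prod.ext (hp.fst_eq h) rfl

end IsGap

theorem exists_isGap_of_lt {a b : Fin n} (ha : lam a ≠ 0) (hb : lam b ≠ 0) (hab : a < b) :
    ∃ i, a ≤ i ∧ IsGap lam i b := by
  set S := univ.filter fun r => a ≤ r ∧ r < b ∧ lam r ≠ 0
  have hS : S.Nonempty := ⟨a, by simp [S, hab, ha]⟩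
  obtain ⟨hai, hib, hi⟩ := (mem_filter.1 (S.max'_mem hS)).2
  refine ⟨S.max' hS, hai, hib, hi, hb, fun r hir hrb => ?_⟩
  by_contra hr
  exact (S.le_max' r (by simp [S, hai.trans hir.le, hrb, hr])).not_gt hir

theorem mul_eq_mul_of_forall_isGap {μ : Fin n → SignType}
    (h : ∀ i j, IsGap lam i j → μ i * μ j = lam i * lam j) {a b : Fin n} (ha : lam a ≠ 0)
    (hb : lam b ≠ 0) (hab : a ≤ b) : μ a * lam a = μ b * lam b := by
  induction b using WellFoundedLT.induction with | _ b ih => ?_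
  rcases hab.eq_or_lt with rfl | hlt
  · rfl
  obtain ⟨i, hai, hib⟩ := exists_isGap_of_lt ha hb hlt
  have step : ∀ x y u v : SignType, u ≠ 0 → v ≠ 0 → x * y = u * v → x * u = y * v := by decide
  exact (ih i hib.1 hib.2.1 hai).trans (step _ _ _ _ hib.2.1 hb (h i b hib))

theorem exists_eq_mul_of_forall_isGap {μ : Fin n → SignType} (h0 : ∀ i, μ i = 0 ↔ lam i = 0)
    (h : ∀ i j, IsGap lam i j → μ i * μ j = lam i * lam j) :
    ∃ ε : SignType, ε ≠ 0 ∧ ∀ i, lam i = ε * μ i := by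
  by_cases hlam : ∃ m, lam m ≠ 0
  swap
  · simp only [not_exists, not_not] at hlam
    exact ⟨1, one_ne_zero, fun i => by rw [hlam i, (h0 i).2 (hlam i), mul_zero]⟩
  obtain ⟨m, hm⟩ := hlam
  refine ⟨μ m * lam m, mul_ne_zero (mt (h0 m).1 hm) hm, fun i => ?_⟩
  by_cases hi : lam i = 0
  · rw [hi, (h0 i).2 hi, mul_zero]
  have hmi : μ m * lam m = μ i * lam i := by
    rcases le_total m i with hle | hle
    · exact mul_eq_mul_of_forall_isGap h hm hi hle
    · exact (mul_eq_mul_of_forall_isGap h hi hm hle).symm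
  have cancel : ∀ x y : SignType, x ≠ 0 → y = x * y * x := by decide
  rw [hmi]
  exact cancel _ _ (mt (h0 i).1 hi)

end SignVector

theorem StrictMono.exists_separating {n : ℕ} {s : Fin n → ℝ} (hs : StrictMono s) (j : Fin n) :
    ∃ t, ∀ r, (s r < t ↔ r < j) ∧ (t < s r ↔ j ≤ r) := by
  suffices ∃ t, (∀ r < j, s r < t) ∧ ∀ r, j ≤ r → t < s r by
    obtain ⟨t, hlt, hgt⟩ := this
    refine ⟨t, fun r => ?_⟩
    rcases lt_or_ge r j with h | h
    · exact ⟨iff_of_true (hlt r h) h, iff_of_false (hlt r h).asymm (not_le.2 h)⟩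
    · exact ⟨iff_of_false (hgt r h).asymm (not_lt.2 h), iff_of_true (hgt r h) h⟩
  by_cases hj : (j : ℕ) = 0
  · refine ⟨s j - 1, fun r hr => absurd (Fin.lt_def.1 hr) (by omega), fun r hr => ?_⟩
    linarith [hs.monotone hr]
  · set p : Fin n := ⟨j - 1, by omega⟩
    have hpj : p < j := Fin.lt_def.2 (by simp only [p]; omega)
    refine ⟨(s p + s j) / 2, fun r hr => ?_, fun r hr => ?_⟩
    · have hrp : r ≤ p := Fin.le_def.2 (by simp only [p]; have := Fin.lt_def.1 hr; omega)
      linarith [hs.monotone hrp, hs hpj]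
    · linarith [hs.monotone hr, hs hpj]

section Realization

variable {n : ℕ} {s : Fin n → ℝ} {lam : Fin n → SignType}

theorem mVal_le_card_roots (hs : StrictMono s) {f : ℝ[X]} (hf : f ≠ 0)
    (hsign : ∀ i, SignType.sign (f.eval (s i)) = lam i) : mVal lam ≤ Multiset.card f.roots := by
  have heval : ∀ i, f.eval (s i) = 0 ↔ lam i = 0 := fun i => by rw [← hsign, sign_eq_zero_iff]
  set Z := (zeroSet lam).map ⟨s, hs.injective⟩
  have hZ : ∀ x ∈ Z, x ∈ f.roots := by
    simp only [Z, mem_map, Function.Embedding.coeFn_mk]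
    rintro _ ⟨r, hr, rfl⟩
    exact (mem_roots hf).2 ((heval r).2 (mem_filter.1 hr).2)
  rw [mVal_eq_card_countedGaps_add_card_zeroSet, ← card_map ⟨s, hs.injective⟩]
  refine Multiset.card_add_card_le_card_of_lt_countP hZ _ (fun p x => s p.1 < x ∧ x < s p.2) ?_ ?_
  · rintro p hp q hq hpq x ⟨hpx, hxp⟩ ⟨hqx, hxq⟩
    have hp' := isGap_of_mem_countedGaps hp
    have hq' := isGap_of_mem_countedGaps hq
    rcases lt_trichotomy p.2 q.2 with h | h | h
    · linarith [hs.monotone (hp'.le_fst_of_lt hq' h)]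
    · exact hpq (Prod.ext (hp'.fst_eq (h ▸ hq')) h)
    · linarith [hs.monotone (hq'.le_fst_of_lt hp' h)]
  · intro p hp
    have hgap := isGap_of_mem_countedGaps hp
    have hcard : #(Z.filter fun x => s p.1 < x ∧ x < s p.2) = (p.2 : ℕ) - p.1 - 1 := by
      rw [filter_map, card_map]
      simpa only [Function.comp_def, Function.Embedding.coeFn_mk, hs.lt_iff_lt]
        using hgap.card_filter_zeroSet
    have hle : #(Z.filter fun x => s p.1 < x ∧ x < s p.2) ≤
        f.roots.countP fun x => s p.1 < x ∧ x < s p.2 := by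
      rw [Multiset.countP_eq_card_filter]
      exact card_le_card_of_forall_mem_multiset fun x hx =>
        Multiset.mem_filter.2 ⟨hZ x (mem_filter.1 hx).1, (mem_filter.1 hx).2⟩
    have hpar := sign_eval_mul_sign_eval (hs hgap.1) ((heval _).not.2 hgap.2.1)
      ((heval _).not.2 hgap.2.2.1)
    rw [hsign, hsign, hgap.mul_eq, if_pos hp] at hpar
    rw [hcard] at hle ⊢
    refine lt_of_le_of_ne hle fun heq => ?_
    rw [← heq, pow_succ] at hpar
    rcases neg_one_pow_eq_or SignType ((p.2 : ℕ) - p.1 - 1) with h | h <;>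
      rw [h] at hpar <;> exact absurd hpar (by decide)

theorem exists_natDegree_eq_mVal (hs : StrictMono s) (lam : Fin n → SignType) :
    ∃ f : ℝ[X], f.natDegree = mVal lam ∧ ∀ i, SignType.sign (f.eval (s i)) = lam i := by
  choose t ht using hs.exists_separating
  set M : Multiset ℝ := (zeroSet lam).val.map s + (countedGaps lam).val.map fun p => t p.2
  set g : ℝ[X] := (M.map fun r => X - C r).prod
  have hg0 : g ≠ 0 := (monic_multiset_prod_of_monic _ _ fun r _ => monic_X_sub_C r).ne_zero
  have hroots : g.roots = M := roots_multiset_prod_X_sub_C M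
  have hzero : ∀ i, g.eval (s i) = 0 ↔ lam i = 0 := by
    intro i
    have hts : ∀ j, t j ≠ s i := fun j h => by
      have := ht j i
      rw [h, lt_self_iff_false] at this
      exact this.2.2 (not_lt.1 this.1.2)
    rw [← IsRoot, ← mem_roots hg0, hroots]
    simp [M, zeroSet, hs.injective.eq_iff, hts]
  have hgap : ∀ i j, IsGap lam i j →
      SignType.sign (g.eval (s i)) * SignType.sign (g.eval (s j)) = lam i * lam j := by
    intro i j hij
    rw [sign_eval_mul_sign_eval (hs hij.1) ((hzero i).not.2 hij.2.1) ((hzero j).not.2 hij.2.2.1),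
      hroots, hij.mul_eq, Multiset.countP_add, Multiset.countP_map, Multiset.countP_map]
    congr 2
    · simp only [hs.lt_iff_lt]
      exact hij.card_filter_zeroSet
    · simp only [(ht _ _).1, (ht _ _).2]
      rw [← Finset.filter_val, Finset.card_val, filter_congr fun p hp =>
        hij.lt_snd_and_snd_le_iff (isGap_of_mem_countedGaps hp), filter_eq']
      split_ifs <;> rfl
  obtain ⟨ε, hε, hlam⟩ := exists_eq_mul_of_forall_isGap (fun i => by simp [hzero]) hgap
  obtain ⟨hεsign, hε0⟩ : SignType.sign (ε : ℝ) = ε ∧ (ε : ℝ) ≠ 0 := by cases ε <;> simp_all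
  refine ⟨C (ε : ℝ) * g, ?_, fun i => ?_⟩
  · rw [natDegree_C_mul hε0, natDegree_multiset_prod_X_sub_C_eq_card, Multiset.card_add,
      Multiset.card_map, Multiset.card_map, mVal_eq_card_countedGaps_add_card_zeroSet, add_comm]
    rfl
  · rw [eval_C_mul, sign_mul, hεsign, hlam]

end Realization

theorem exists_poly_sign_iff {n : ℕ} (s : Fin n → ℝ) (hs : StrictMono s) (D : ℕ)
    (lam : Fin n → SignType) (hlam : lam ≠ 0) :
    (∃ f : Polynomial ℝ, f.natDegree ≤ D ∧
        ∀ i, SignType.sign (f.eval (s i)) = lam i) ↔ mVal lam ≤ D := by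
  constructor
  · rintro ⟨f, hdeg, hsign⟩
    have hf : f ≠ 0 := by
      rintro rfl
      exact hlam (funext fun i => by simp [← hsign i])
    exact (mVal_le_card_roots hs hf hsign).trans ((card_roots' f).trans hdeg)
  · intro hD
    obtain ⟨f, hf, hsign⟩ := exists_natDegree_eq_mVal hs lam
    exact ⟨f, hf.trans_le hD, hsign⟩
end

section
/- Let s_1 < s_2 < \cdots < s_n be real numbers, let \lambda be a sign vector of length n, and let f be a nonzero real polynomial with sign(f(s_i)) = \lambda_i for all i. Then f has at least m(\lambda) real roots counted with multiplicity; in particular, natDegree f \ge m(\lambda). -/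
/-!
A zero `λ_r = 0` is a root `s_r` of `f`. For a gap `i < j`, the `j - i - 1` zeros strictly
between give as many roots in `(s_i, s_j)`, while the number of roots in `(s_i, s_j)` counted
with multiplicity is even exactly when `f(s_i)` and `f(s_j)` have the same sign (factor out the
roots one at a time; with none left, the intermediate value theorem applies). The gap condition
says that this parity differs from that of `j - i - 1`, so `(s_i, s_j)` contains at least
`j - i` roots. The intervals of distinct gaps are disjoint, so these roots, together with the
zeros of `λ` lying outside every gap, add up to `m(λ)` roots.
-/

open Finset

open Polynomial

theorem ContinuousOn.mul_pos_of_forall_ne_zero {α : Type*}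
    [ConditionallyCompleteLinearOrder α] [TopologicalSpace α] [OrderTopology α] [DenselyOrdered α]
    {g : α → ℝ} {a b : α} (hab : a ≤ b)
    (hg : ContinuousOn g (Set.Icc a b)) (h0 : ∀ x ∈ Set.Icc a b, g x ≠ 0) : 0 < g a * g b := by
  by_contra! h
  have hmem : (0 : ℝ) ∈ Set.uIcc (g a) (g b) := by
    rcases mul_nonpos_iff.mp h with h | h
    · exact Set.mem_uIcc.mpr (Or.inr ⟨h.2, h.1⟩)
    · exact Set.mem_uIcc.mpr (Or.inl h)
  rw [← Set.uIcc_of_le hab] at hg h0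
  obtain ⟨x, hx, hgx⟩ := intermediate_value_uIcc hg hmem
  exact h0 x hx hgx

theorem SignType.ne_iff_eq_neg {a b : SignType} (ha : a ≠ 0) (hb : b ≠ 0) :
    a ≠ b ↔ a = -b := by
  decide +revert

theorem mul_pos_iff_sign_eq_sign {α : Type*} [Ring α] [LinearOrder α] [IsStrictOrderedRing α]
    {x y : α} (hx : x ≠ 0) (hy : y ≠ 0) : 0 < x * y ↔ SignType.sign x = SignType.sign y := by
  rw [← sign_eq_one_iff, sign_mul]
  have hx' := sign_ne_zero.mpr hx
  have hy' := sign_ne_zero.mpr hy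
  generalize SignType.sign x = u at *
  generalize SignType.sign y = v at *
  decide +revert

theorem Multiset.countP_mem_iUnion₂ {ι α : Type*} (M : Multiset α) {G : Finset ι}
    {S : ι → Set α} (hS : (G : Set ι).PairwiseDisjoint S) [DecidablePred (· ∈ ⋃ p ∈ G, S p)]
    [∀ p, DecidablePred (· ∈ S p)] :
    M.countP (· ∈ ⋃ p ∈ G, S p) = ∑ p ∈ G, M.countP (· ∈ S p) := by
  induction M using Multiset.induction_on with
  | empty => simp
  | cons x M ih =>
    simp only [Multiset.countP_cons, Finset.sum_add_distrib, ih, add_right_inj]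
    by_cases hx : x ∈ ⋃ p ∈ G, S p
    · obtain ⟨q, hq, hxq⟩ := Set.mem_iUnion₂.mp hx
      rw [if_pos hx, Finset.sum_eq_single_of_mem q hq fun p hp hpq => if_neg fun hxp =>
        (hS hp hq hpq).ne_of_mem hxp hxq rfl, if_pos hxq]
    · rw [if_neg hx, Finset.sum_eq_zero fun p hp => if_neg fun hxp =>
        hx (Set.mem_iUnion₂.mpr ⟨p, hp, hxp⟩)]

namespace Polynomial

theorem card_le_countP_roots {R ι : Type*} [CommRing R] [IsDomain R] {f : R[X]}
    (hf : f ≠ 0) {P : R → Prop} [DecidablePred P] {t : Finset ι} {g : ι → R}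
    (hg : Set.InjOn g t) (h : ∀ i ∈ t, f.IsRoot (g i) ∧ P (g i)) : #t ≤ f.roots.countP P := by
  classical
  calc #t ≤ #(f.roots.filter P).toFinset := card_le_card_of_injOn g (fun i hi => by
        simpa [mem_roots hf] using h i hi) hg
    _ ≤ f.roots.countP P :=
      Multiset.countP_eq_card_filter P f.roots ▸ Multiset.toFinset_card_le _

theorem even_countP_roots_Ioo_iff {f : ℝ[X]} (hf : f ≠ 0) {a b : ℝ} (hab : a ≤ b)
    (ha : f.eval a ≠ 0) (hb : f.eval b ≠ 0) :
    Even (f.roots.countP (· ∈ Set.Ioo a b)) ↔ 0 < f.eval a * f.eval b := by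
  induction h : f.roots.countP (· ∈ Set.Ioo a b) generalizing f with
  | zero =>
    simp only [Even.zero, true_iff]
    refine f.continuous.continuousOn.mul_pos_of_forall_ne_zero hab fun x hx hfx => ?_
    rcases Set.eq_endpoints_or_mem_Ioo_of_mem_Icc hx with rfl | rfl | hx
    · exact ha hfx
    · exact hb hfx
    · exact (Multiset.countP_pos.mpr ⟨x, (mem_roots hf).mpr hfx, hx⟩).ne' h
  | succ k ih =>
    obtain ⟨r, hr, hrI⟩ := Multiset.countP_pos.mp (by rw [h]; exact k.succ_pos)
    obtain ⟨g, rfl⟩ := dvd_iff_isRoot.mpr ((mem_roots hf).mp hr)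
    have hg : g ≠ 0 := right_ne_zero_of_mul hf
    rw [roots_mul hf, roots_X_sub_C, Multiset.singleton_add, Multiset.countP_cons_of_pos _ hrI,
      Nat.add_right_cancel_iff] at h
    simp only [eval_mul, eval_sub, eval_X, eval_C, ne_eq, mul_eq_zero, not_or] at ha hb ⊢
    have hr : (a - r) * (b - r) < 0 :=
      mul_neg_of_neg_of_pos (by linarith [hrI.1]) (by linarith [hrI.2])
    rw [Nat.even_add_one, ih hg ha.2 hb.2 h, show (a - r) * g.eval a * ((b - r) * g.eval b) =
      (a - r) * (b - r) * (g.eval a * g.eval b) by ring]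
    rcases (mul_ne_zero ha.2 hb.2).lt_or_gt with hg | hg
    · exact iff_of_true hg.not_gt (mul_pos_of_neg_of_neg hr hg)
    · exact iff_of_false (not_not.mpr hg) (mul_neg_of_neg_of_pos hr hg).not_gt

end Polynomial

structure IsGap_s1 {n : ℕ} (lam : Fin n → SignType) (i j : Fin n) : Prop where
  lt : i < j
  left_ne_zero : lam i ≠ 0
  right_ne_zero : lam j ≠ 0
  eq_zero_of_lt_of_lt : ∀ r, i < r → r < j → lam r = 0
  even_iff_ne : Even ((j : ℕ) - i - 1) ↔ lam i ≠ lam j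

section SignVector

variable {n : ℕ} {lam : Fin n → SignType}

theorem isGap_iff {i j : Fin n} : IsGap_s1 lam i j ↔ IsEvenGap lam i j ∨ IsOddGap lam i j := by
  constructor
  · intro ⟨hij, hi, hj, hzero, heven⟩
    by_cases hpar : Even ((j : ℕ) - i - 1)
    · exact Or.inl ⟨hij, hi, hj, (SignType.ne_iff_eq_neg hi hj).mp (heven.mp hpar), hzero,
        hpar⟩
    · exact Or.inr ⟨hij, hi, hj, not_not.mp (heven.not.mp hpar), hzero,
        Nat.not_even_iff_odd.mp hpar⟩
  · rintro (⟨hij, hi, hj, hsign, hzero, hpar⟩ | ⟨hij, hi, hj, hsign, hzero, hpar⟩)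
    · exact ⟨hij, hi, hj, hzero, iff_of_true hpar ((SignType.ne_iff_eq_neg hi hj).mpr hsign)⟩
    · exact ⟨hij, hi, hj, hzero,
        iff_of_false (Nat.not_even_iff_odd.mpr hpar) (not_not.mpr hsign)⟩

instance (lam : Fin n → SignType) (i j : Fin n) : Decidable (IsGap_s1 lam i j) :=
  decidable_of_iff _ isGap_iff.symm

variable (lam) in
def gaps : Finset (Fin n × Fin n) := {p | IsGap_s1 lam p.1 p.2}

variable (lam) in
def gapInterior : Finset (Fin n) := (gaps lam).biUnion fun p => Finset.Ioo p.1 p.2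

@[simp]
theorem mem_gaps {p : Fin n × Fin n} : p ∈ gaps lam ↔ IsGap_s1 lam p.1 p.2 := by
  simp [gaps]

theorem mVal_eq_card_gaps_add (lam : Fin n → SignType) :
    mVal lam = #(gaps lam) + #{i | lam i = 0} := by
  have hdisj : Disjoint ({p | IsEvenGap lam p.1 p.2} : Finset (Fin n × Fin n))
      ({p | IsOddGap lam p.1 p.2} : Finset (Fin n × Fin n)) :=
    disjoint_filter.mpr fun (p : Fin n × Fin n) _ ⟨_, _, hj, hneg, _⟩ ⟨_, _, _, heq, _⟩ => by
      rw [heq] at hneg; exact hj (SignType.self_eq_neg_iff.mp hneg)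
  simp only [mVal, gaps, isGap_iff, filter_or, card_union_of_disjoint hdisj]

theorem mVal_le_sum_gaps_add (lam : Fin n → SignType) :
    mVal lam ≤
      ∑ p ∈ gaps lam, ((p.2 : ℕ) - p.1) + #{r | lam r = 0 ∧ r ∉ gapInterior lam} := by
  have hzeros :
      #{r | lam r = 0} ≤ #(gapInterior lam) + #{r | lam r = 0 ∧ r ∉ gapInterior lam} :=
    (Finset.card_le_card fun r hr => by by_cases h : r ∈ gapInterior lam <;> simp_all).trans
      (card_union_le _ _)
  have hinterior : #(gapInterior lam) ≤ ∑ p ∈ gaps lam, ((p.2 : ℕ) - p.1 - 1) :=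
    card_biUnion_le.trans_eq (sum_congr rfl fun p _ => Fin.card_Ioo _ _)
  have hsum : #(gaps lam) + ∑ p ∈ gaps lam, ((p.2 : ℕ) - p.1 - 1) =
      ∑ p ∈ gaps lam, ((p.2 : ℕ) - p.1) := by
    rw [card_eq_sum_ones, ← sum_add_distrib]
    refine sum_congr rfl fun p hp => ?_
    have := Fin.lt_def.mp (mem_gaps.mp hp).lt
    omega
  rw [mVal_eq_card_gaps_add]
  omega

theorem IsGap_s1.right_le_of_lt {i j k l : Fin n} (hp : IsGap_s1 lam i j) (hq : IsGap_s1 lam k l)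
    (hik : i < k) : j ≤ k :=
  le_of_not_gt fun hkj => hq.left_ne_zero (hp.eq_zero_of_lt_of_lt k hik hkj)

theorem IsGap_s1.right_unique {i j l : Fin n} (hj : IsGap_s1 lam i j) (hl : IsGap_s1 lam i l) :
    j = l := by
  rcases lt_trichotomy j l with h | h | h
  · exact absurd (hl.eq_zero_of_lt_of_lt j hj.lt h) hj.right_ne_zero
  · exact h
  · exact absurd (hj.eq_zero_of_lt_of_lt l hl.lt h) hl.right_ne_zero

theorem pairwiseDisjoint_gaps_Ioo {α : Type*} [Preorder α] {s : Fin n → α} (hs : Monotone s) :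
    (gaps lam : Set (Fin n × Fin n)).PairwiseDisjoint fun p => Set.Ioo (s p.1) (s p.2) := by
  intro p hp q hq hpq
  wlog hle : p.1 ≤ q.1 generalizing p q
  · exact (this hq hp hpq.symm (le_of_not_ge hle)).symm
  rw [Finset.mem_coe, mem_gaps] at hp hq
  rcases hle.lt_or_eq with hlt | heq
  · have hsep := hs (hp.right_le_of_lt hq hlt)
    exact Set.disjoint_left.mpr fun x hxp hxq => (hxp.2.trans_le hsep).not_gt hxq.1
  · exact absurd (Prod.ext heq (hp.right_unique (heq ▸ hq))) hpq

end SignVector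

section Roots

variable {n : ℕ} {s : Fin n → ℝ} {lam : Fin n → SignType} {f : ℝ[X]}

theorem IsGap_s1.sub_le_countP_roots (hs : StrictMono s) (hf : f ≠ 0)
    (hsign : ∀ i, SignType.sign (f.eval (s i)) = lam i) {i j : Fin n} (hp : IsGap_s1 lam i j) :
    (j : ℕ) - i ≤ f.roots.countP (· ∈ Set.Ioo (s i) (s j)) := by
  have heval : ∀ r, f.eval (s r) = 0 ↔ lam r = 0 := fun r => by rw [← hsign, sign_eq_zero_iff]
  have hi := (heval i).not.mpr hp.left_ne_zero
  have hj := (heval j).not.mpr hp.right_ne_zero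
  have hinterior : (j : ℕ) - i - 1 ≤ f.roots.countP (· ∈ Set.Ioo (s i) (s j)) :=
    Fin.card_Ioo i j ▸ card_le_countP_roots hf hs.injective.injOn fun r hr =>
      have hr := Finset.mem_Ioo.mp hr
      ⟨(heval r).mpr (hp.eq_zero_of_lt_of_lt r hr.1 hr.2), hs hr.1, hs hr.2⟩
  have hparity :
      Even (f.roots.countP (· ∈ Set.Ioo (s i) (s j))) ↔ ¬Even ((j : ℕ) - i - 1) := by
    rw [even_countP_roots_Ioo_iff hf (hs hp.lt).le hi hj, mul_pos_iff_sign_eq_sign hi hj,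
      hsign, hsign, hp.even_iff_ne, not_not]
  by_contra! hlt
  rw [show f.roots.countP (· ∈ Set.Ioo (s i) (s j)) = (j : ℕ) - i - 1 by omega] at hparity
  exact iff_not_self hparity

open Classical in
theorem card_zeros_not_mem_gapInterior_le (hs : StrictMono s) (hf : f ≠ 0)
    (hsign : ∀ i, SignType.sign (f.eval (s i)) = lam i) :
    #{r | lam r = 0 ∧ r ∉ gapInterior lam} ≤
      f.roots.countP (· ∉ ⋃ p ∈ gaps lam, Set.Ioo (s p.1) (s p.2)) := by
  refine card_le_countP_roots hf hs.injective.injOn fun r hr => ⟨?_, fun hmem => ?_⟩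
  · rw [Finset.mem_filter] at hr
    rw [IsRoot, ← sign_eq_zero_iff, hsign, hr.2.1]
  · obtain ⟨p, hp, hrp⟩ := Set.mem_iUnion₂.mp hmem
    refine (Finset.mem_filter.mp hr).2.2 (Finset.mem_biUnion.mpr ⟨p, hp, ?_⟩)
    exact Finset.mem_Ioo.mpr ⟨hs.lt_iff_lt.mp hrp.1, hs.lt_iff_lt.mp hrp.2⟩

end Roots

theorem mVal_le_roots_card {n : ℕ} (s : Fin n → ℝ) (hs : StrictMono s)
    (lam : Fin n → SignType) (f : Polynomial ℝ) (hf : f ≠ 0)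
    (hsign : ∀ i, SignType.sign (f.eval (s i)) = lam i) :
    mVal lam ≤ f.roots.card ∧ mVal lam ≤ f.natDegree := by
  classical
  suffices h : mVal lam ≤ f.roots.card from ⟨h, h.trans (card_roots' f)⟩
  have hgaps : ∑ p ∈ gaps lam, ((p.2 : ℕ) - p.1) ≤
      f.roots.countP (· ∈ ⋃ p ∈ gaps lam, Set.Ioo (s p.1) (s p.2)) := by
    rw [Multiset.countP_mem_iUnion₂ _ (pairwiseDisjoint_gaps_Ioo hs.monotone)]
    exact Finset.sum_le_sum fun p hp => (mem_gaps.mp hp).sub_le_countP_roots hs hf hsign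
  calc mVal lam
      ≤ ∑ p ∈ gaps lam, ((p.2 : ℕ) - p.1) + #{r | lam r = 0 ∧ r ∉ gapInterior lam} :=
        mVal_le_sum_gaps_add lam
    _ ≤ _ := add_le_add hgaps (card_zeros_not_mem_gapInterior_le hs hf hsign)
    _ = f.roots.card := (Multiset.card_eq_countP_add_countP _ _).symm
end

section
/- Let n \ge 3, let t_1 < t_2 < \cdots < t_n be real numbers, and let f : \mathbb{R} \to \mathbb{R} be twice differentiable. For 1 \le i \le n-1 let s_i = (f(t_{i+1}) - f(t_i))/(t_{i+1} - t_i) be the slope of the secant line over [t_i, t_{i+1}]. Then there exist real numbers \mu_2 < \mu_3 < \cdots < \mu_{n-1} such that for each 2 \le i \le n-1 we have t_{i-1} < \mu_i < t_{i+1} and sign(f''(\mu_i)) = sign(s_i - s_{i-1}). -/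
lemma sign_div_of_pos (a b : ℝ) (hb : 0 < b) :
    SignType.sign (a / b) = SignType.sign a := by
  rcases lt_trichotomy a 0 with h | h | h
  · rw [sign_neg (div_neg_of_neg_of_pos h hb), sign_neg h]
  · rw [h, zero_div]
  · rw [sign_pos (div_pos h hb), sign_pos h]

/-- For a twice differentiable function `f` and points `t 1 < t 2 < ⋯ < t n` (`n ≥ 3`),
with `s i` the slope of the secant of `f` over `[t i, t (i+1)]`, there are points
`μ 2 < μ 3 < ⋯ < μ (n-1)` with `t (i-1) < μ i < t (i+1)` and
`sign (f'' (μ i)) = sign (s i - s (i-1))` for all `2 ≤ i ≤ n-1`. -/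
theorem exists_second_deriv_sign_points (n : ℕ) (hn : 3 ≤ n) (t : ℕ → ℝ)
    (ht : ∀ i j, 1 ≤ i → i < j → j ≤ n → t i < t j)
    (f : ℝ → ℝ) (hf : Differentiable ℝ f) (hf' : Differentiable ℝ (deriv f))
    (s : ℕ → ℝ) (hs : ∀ i, s i = (f (t (i + 1)) - f (t i)) / (t (i + 1) - t i)) :
    ∃ μ : ℕ → ℝ,
      (∀ i j, 2 ≤ i → i < j → j ≤ n - 1 → μ i < μ j) ∧
      ∀ i, 2 ≤ i → i ≤ n - 1 →
        t (i - 1) < μ i ∧ μ i < t (i + 1) ∧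
        SignType.sign (deriv (deriv f) (μ i)) = SignType.sign (s i - s (i - 1)) := by
  -- Step 1: points ξ i ∈ (t i, t (i+1)) with deriv f (ξ i) = s i, for 1 ≤ i ≤ n-1.
  have key : ∀ i : ℕ, ∃ c : ℝ, 1 ≤ i → i + 1 ≤ n →
      c ∈ Set.Ioo (t i) (t (i + 1)) ∧ deriv f c = s i := by
    intro i
    by_cases h : 1 ≤ i ∧ i + 1 ≤ n
    · have hab : t i < t (i + 1) := ht i (i + 1) h.1 (Nat.lt_succ_self i) h.2
      obtain ⟨c, hc, hc'⟩ := exists_deriv_eq_slope f hab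
        (hf.continuous.continuousOn) (hf.differentiableOn)
      exact ⟨c, fun _ _ => ⟨hc, by rw [hc', hs i]⟩⟩
    · exact ⟨0, fun h1 h2 => absurd ⟨h1, h2⟩ h⟩
  choose ξ hξ using key
  -- ξ is valid on [1, n-1]
  have hξ' : ∀ i, 1 ≤ i → i ≤ n - 1 →
      ξ i ∈ Set.Ioo (t i) (t (i + 1)) ∧ deriv f (ξ i) = s i := by
    intro i h1 h2
    exact hξ i h1 (by omega)
  -- Step 2: points μ i ∈ (ξ (i-1), ξ i) with f''(μ i) = (s i - s (i-1))/(ξ i - ξ (i-1)).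
  have key2 : ∀ i : ℕ, ∃ c : ℝ, 2 ≤ i → i ≤ n - 1 →
      c ∈ Set.Ioo (ξ (i - 1)) (ξ i) ∧
      deriv (deriv f) c = (s i - s (i - 1)) / (ξ i - ξ (i - 1)) := by
    intro i
    by_cases h : 2 ≤ i ∧ i ≤ n - 1
    · obtain ⟨h2, h3⟩ := h
      obtain ⟨hm1, he1⟩ := hξ' (i - 1) (by omega) (by omega)
      obtain ⟨hm2, he2⟩ := hξ' i (by omega) h3
      have hi1 : i - 1 + 1 = i := by omega
      rw [hi1] at hm1
      have hab : ξ (i - 1) < ξ i := lt_trans hm1.2 hm2.1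
      obtain ⟨c, hc, hc'⟩ := exists_deriv_eq_slope (deriv f) hab
        (hf'.continuous.continuousOn) (hf'.differentiableOn)
      exact ⟨c, fun _ _ => ⟨hc, by rw [hc', he1, he2]⟩⟩
    · exact ⟨0, fun h1 h2 => absurd ⟨h1, h2⟩ h⟩
  choose μ hμ using key2
  refine ⟨μ, ?_, ?_⟩
  · -- monotonicity
    intro i j h2 hij hjn
    obtain ⟨hmi, _⟩ := hμ i h2 (by omega)
    obtain ⟨hmj, _⟩ := hμ j (by omega) hjn
    have hle : ξ i ≤ ξ (j - 1) := by
      rcases eq_or_lt_of_le (show i ≤ j - 1 by omega) with h | h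
      · rw [h]
      · obtain ⟨hmi', _⟩ := hξ' i (by omega) (by omega)
        obtain ⟨hmj', _⟩ := hξ' (j - 1) (by omega) (by omega)
        have : t (i + 1) ≤ t (j - 1) := by
          rcases eq_or_lt_of_le (show i + 1 ≤ j - 1 by omega) with h' | h'
          · rw [h']
          · exact le_of_lt (ht (i + 1) (j - 1) (by omega) h' (by omega))
        exact le_of_lt (lt_of_lt_of_le hmi'.2 (le_trans this (le_of_lt hmj'.1)))
    calc μ i < ξ i := hmi.2
      _ ≤ ξ (j - 1) := hle
      _ < μ j := hmj.1
  · intro i h2 h3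
    obtain ⟨hm, he⟩ := hμ i h2 h3
    obtain ⟨hm1, _⟩ := hξ' (i - 1) (by omega) (by omega)
    obtain ⟨hm2, _⟩ := hξ' i (by omega) h3
    have hab : ξ (i - 1) < ξ i := lt_trans hm.1 hm.2
    refine ⟨lt_trans hm1.1 hm.1, lt_trans hm.2 hm2.2, ?_⟩
    rw [he, sign_div_of_pos _ _ (by linarith)]
end

section
/- Let n \ge 3, let t_1 < t_2 < \cdots < t_n be real numbers, and let f be a real polynomial whose second derivative f'' is not the zero polynomial. For 1 \le i \le n-1 let s_i = (f(t_{i+1}) - f(t_i))/(t_{i+1} - t_i), and define the sign vector \lambda'' of length n-2 by \lambda''_i = sign(s_{i-1} - s_i) for 2 \le i \le n-1 (so \lambda''_i is +, 0 or - according to whether the slope s_i of the i-th secant is smaller than, equal to, or greater than the slope s_{i-1} of the previous secant). Then natDegree f \ge m(\lambda'') + 2. -/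
open Finset

/-! ### Auxiliary lemmas -/

private lemma sign_div_pos' {x d : ℝ} (hd : 0 < d) :
    SignType.sign (x / d) = SignType.sign x := by
  rcases lt_trichotomy x 0 with h | h | h
  · rw [sign_neg h, sign_neg (div_neg_of_neg_of_pos h hd)]
  · simp [h]
  · rw [sign_pos h, sign_pos (div_pos h hd)]

private lemma mul_neg_of_sign' (u v : ℝ) (h : SignType.sign u = - SignType.sign v)
    (hv : v ≠ 0) : u * v < 0 := by
  rcases lt_trichotomy v 0 with h' | h' | h'
  · rw [sign_neg h'] at h
    have hu : 0 < u := sign_eq_one_iff.mp (by simpa using h)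
    exact mul_neg_of_pos_of_neg hu h'
  · exact absurd h' hv
  · rw [sign_pos h'] at h
    have hu : u < 0 := sign_eq_neg_one_iff.mp (by simpa using h)
    exact mul_neg_of_neg_of_pos hu h'

private lemma mul_pos_of_sign' (u v : ℝ) (h : SignType.sign u = SignType.sign v)
    (hv : v ≠ 0) : 0 < u * v := by
  rcases lt_trichotomy v 0 with h' | h' | h'
  · rw [sign_neg h'] at h
    have hu : u < 0 := sign_eq_neg_one_iff.mp h
    exact mul_pos_of_neg_of_neg hu h'
  · exact absurd h' hv
  · rw [sign_pos h'] at h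
    have hu : 0 < u := sign_eq_one_iff.mp h
    exact mul_pos hu h'

open Polynomial in
private lemma no_root_Ioo (g : ℝ[X]) (hg : g ≠ 0) {a b : ℝ} (hab : a < b)
    (ha : g.eval a ≠ 0) (hb : g.eval b ≠ 0)
    (h : ∀ r ∈ g.roots, ¬(a < r ∧ r < b)) : 0 < g.eval a * g.eval b := by
  rcases lt_trichotomy (g.eval a * g.eval b) 0 with hlt | heq | hgt
  · exfalso
    have hcont : ContinuousOn (fun x => eval x g) (Set.Icc a b) :=
      (Polynomial.continuous g).continuousOn
    rcases mul_neg_iff.mp hlt with ⟨h1, h2⟩ | ⟨h1, h2⟩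
    · -- eval a > 0, eval b < 0
      obtain ⟨r, hr, hr0⟩ := intermediate_value_Ioo' hab.le hcont ⟨h2, h1⟩
      exact h r (mem_roots'.mpr ⟨hg, hr0⟩) ⟨hr.1, hr.2⟩
    · -- eval a < 0, eval b > 0
      obtain ⟨r, hr, hr0⟩ := intermediate_value_Ioo hab.le hcont ⟨h1, h2⟩
      exact h r (mem_roots'.mpr ⟨hg, hr0⟩) ⟨hr.1, hr.2⟩
  · exact absurd heq (mul_ne_zero ha hb)
  · exact hgt

open Polynomial in
private lemma parity_lemma : ∀ (m : ℕ) (g : ℝ[X]), g ≠ 0 → Multiset.card g.roots ≤ m →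
    ∀ (a b : ℝ), a < b → g.eval a ≠ 0 → g.eval b ≠ 0 →
    (Even (Multiset.card (g.roots.filter (fun r => a < r ∧ r < b))) ↔
      0 < g.eval a * g.eval b) := by
  intro m
  induction m with
  | zero =>
    intro g hg hcard a b hab ha hb
    have hz : g.roots = 0 := Multiset.card_eq_zero.mp (Nat.le_zero.mp hcard)
    rw [hz]
    simp only [Multiset.filter_zero, Multiset.card_zero, Even.zero, true_iff]
    exact no_root_Ioo g hg hab ha hb (by rw [hz]; simp)
  | succ m ih =>
    intro g hg hcard a b hab ha hb
    by_cases hroot : ∃ r ∈ g.roots, a < r ∧ r < b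
    · obtain ⟨r, hrmem, hra, hrb⟩ := hroot
      have hr : g.IsRoot r := (Polynomial.mem_roots'.mp hrmem).2
      have hfac : (X - C r) * (g / (X - C r)) = g := Polynomial.mul_div_eq_iff_isRoot.mpr hr
      set q := g / (X - C r) with hq
      have hq0 : q ≠ 0 := fun h => hg (by rw [← hfac, h, mul_zero])
      have hroots : g.roots = r ::ₘ q.roots := by
        conv_lhs => rw [← hfac]
        rw [Polynomial.roots_mul (by rw [hfac]; exact hg), Polynomial.roots_X_sub_C,
          Multiset.singleton_add]
      have hcardq : Multiset.card q.roots ≤ m := by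
        have hh := congrArg Multiset.card hroots
        rw [Multiset.card_cons] at hh
        omega
      have hqa : g.eval a = (a - r) * q.eval a := by
        conv_lhs => rw [← hfac]
        simp
      have hqb : g.eval b = (b - r) * q.eval b := by
        conv_lhs => rw [← hfac]
        simp
      have hqa0 : q.eval a ≠ 0 := fun h => ha (by rw [hqa, h, mul_zero])
      have hqb0 : q.eval b ≠ 0 := fun h => hb (by rw [hqb, h, mul_zero])
      have hihq := ih q hq0 hcardq a b hab hqa0 hqb0
      have hfilter : Multiset.card (g.roots.filter (fun r' => a < r' ∧ r' < b))
          = Multiset.card (q.roots.filter (fun r' => a < r' ∧ r' < b)) + 1 := by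
        rw [hroots, Multiset.filter_cons_of_pos _ ⟨hra, hrb⟩, Multiset.card_cons]
      rw [hfilter, Nat.even_add_one, hihq, hqa, hqb]
      have har : a - r < 0 := by linarith
      have hbr : 0 < b - r := by linarith
      have h2 : (a - r) * (b - r) < 0 := mul_neg_of_neg_of_pos har hbr
      have e : (a - r) * q.eval a * ((b - r) * q.eval b)
          = ((a - r) * (b - r)) * (q.eval a * q.eval b) := by ring
      constructor
      · intro h
        have h' : q.eval a * q.eval b < 0 :=
          lt_of_le_of_ne (not_lt.mp h) (mul_ne_zero hqa0 hqb0)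
        rw [e]
        exact mul_pos_of_neg_of_neg h2 h'
      · intro h hq'
        rw [e] at h
        have : ((a - r) * (b - r)) * (q.eval a * q.eval b) < 0 :=
          mul_neg_of_neg_of_pos h2 hq'
        linarith
    · have h0 : g.roots.filter (fun r => a < r ∧ r < b) = 0 := by
        rw [Multiset.filter_eq_nil]
        intro r hr hcond
        exact hroot ⟨r, hr, hcond⟩
      rw [h0]
      simp only [Multiset.card_zero, Even.zero, true_iff]
      exact no_root_Ioo g hg hab ha hb (fun r hr hc => hroot ⟨r, hr, hc⟩)

private lemma two_filter_le {α : Type*} (S : Multiset α) (P Q : α → Prop)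
    [DecidablePred P] [DecidablePred Q] (h : ∀ r, P r → ¬ Q r) :
    Multiset.card (S.filter P) + Multiset.card (S.filter Q) ≤ Multiset.card S := by
  have hff := Multiset.filter_add_filter P Q S
  have h2 : S.filter (fun a => P a ∧ Q a) = 0 := by
    rw [Multiset.filter_eq_nil]
    exact fun a _ ha => h a ha.1 ha.2
  calc Multiset.card (S.filter P) + Multiset.card (S.filter Q)
      = Multiset.card (S.filter P + S.filter Q) := (Multiset.card_add _ _).symm
    _ = Multiset.card (S.filter (fun a => P a ∨ Q a) + S.filter (fun a => P a ∧ Q a)) := by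
        rw [hff]
    _ = Multiset.card (S.filter (fun a => P a ∨ Q a)) := by rw [h2, add_zero]
    _ ≤ Multiset.card S := Multiset.card_le_card (Multiset.filter_le _ _)

private lemma multiset_sum_filter_le {α ι : Type*} [DecidableEq ι] (S : Multiset α)
    (F : Finset ι) (pred : ι → α → Prop) [∀ i, DecidablePred (pred i)]
    (hdisj : ∀ p ∈ F, ∀ q ∈ F, p ≠ q → ∀ r, pred p r → ¬ pred q r) :
    ∑ p ∈ F, Multiset.card (S.filter (pred p))
      ≤ Multiset.card (S.filter (fun r => ∃ p ∈ F, pred p r)) := by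
  classical
  induction F using Finset.induction_on with
  | empty => simp
  | @insert a F' ha ih =>
    rw [Finset.sum_insert ha]
    have hih := ih (fun p hp q hq hpq => hdisj p (Finset.mem_insert_of_mem hp) q
      (Finset.mem_insert_of_mem hq) hpq)
    have hff := Multiset.filter_add_filter (pred a) (fun r => ∃ p ∈ F', pred p r) S
    have h0 : S.filter (fun r => pred a r ∧ ∃ p ∈ F', pred p r) = 0 := by
      rw [Multiset.filter_eq_nil]
      rintro r _ ⟨h1, p, hp, h2⟩
      exact hdisj a (Finset.mem_insert_self a F') p (Finset.mem_insert_of_mem hp)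
        (fun h => ha (h ▸ hp)) r h1 h2
    have hcongr : S.filter (fun r => pred a r ∨ ∃ p ∈ F', pred p r)
        = S.filter (fun r => ∃ p ∈ insert a F', pred p r) := by
      apply Multiset.filter_congr
      intro r _
      constructor
      · rintro (h | ⟨p, hp, h⟩)
        · exact ⟨a, Finset.mem_insert_self a F', h⟩
        · exact ⟨p, Finset.mem_insert_of_mem hp, h⟩
      · rintro ⟨p, hp, h⟩
        rcases Finset.mem_insert.mp hp with rfl | hp'
        · exact Or.inl h
        · exact Or.inr ⟨p, hp', h⟩
    have hkey : Multiset.card (S.filter (pred a))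
        + Multiset.card (S.filter (fun r => ∃ p ∈ F', pred p r))
        ≤ Multiset.card (S.filter (fun r => ∃ p ∈ insert a F', pred p r)) := by
      calc Multiset.card (S.filter (pred a))
          + Multiset.card (S.filter (fun r => ∃ p ∈ F', pred p r))
          = Multiset.card (S.filter (pred a) + S.filter (fun r => ∃ p ∈ F', pred p r)) :=
            (Multiset.card_add _ _).symm
        _ = Multiset.card (S.filter (fun r => pred a r ∨ ∃ p ∈ F', pred p r)
              + S.filter (fun r => pred a r ∧ ∃ p ∈ F', pred p r)) := by rw [hff]
        _ = Multiset.card (S.filter (fun r => pred a r ∨ ∃ p ∈ F', pred p r)) := by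
              rw [h0, add_zero]
        _ = Multiset.card (S.filter (fun r => ∃ p ∈ insert a F', pred p r)) := by rw [hcongr]
        _ ≤ Multiset.card (S.filter (fun r => ∃ p ∈ insert a F', pred p r)) := le_rfl
    omega

open Polynomial in
private lemma key_lemma {N : ℕ} (g : ℝ[X]) (hg : g ≠ 0) (lam : Fin N → SignType)
    (xi : Fin N → ℝ)
    (hmono : ∀ i j : Fin N, i < j → xi i < xi j)
    (hsign : ∀ j, SignType.sign (g.eval (xi j)) = - lam j) :
    mVal lam ≤ Multiset.card g.roots := by
  classical
  have hinj : Function.Injective xi := by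
    intro a b hab
    by_contra hne
    rcases lt_or_gt_of_ne hne with h | h
    · exact absurd hab (ne_of_lt (hmono _ _ h))
    · exact absurd hab.symm (ne_of_lt (hmono _ _ h))
  have hmono_le : ∀ i j : Fin N, i ≤ j → xi i ≤ xi j := by
    intro i j hij
    rcases eq_or_lt_of_le hij with rfl | h
    · exact le_rfl
    · exact (hmono _ _ h).le
  have hreflect : ∀ i j : Fin N, xi i < xi j → i < j := by
    intro i j h
    rcases lt_trichotomy i j with h' | h' | h'
    · exact h'
    · exact absurd (h' ▸ h) (lt_irrefl _)
    · exact absurd (hmono _ _ h') (not_lt.mpr h.le)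
  have hroot_of_zero : ∀ i : Fin N, lam i = 0 → g.eval (xi i) = 0 := by
    intro i h0
    have hh := hsign i
    rw [h0, neg_zero, sign_eq_zero_iff] at hh
    exact hh
  have hne_of_nonzero : ∀ i : Fin N, lam i ≠ 0 → g.eval (xi i) ≠ 0 := by
    intro i h0 h
    apply h0
    have hh := hsign i
    rw [h, sign_zero] at hh
    cases hl : lam i
    · rfl
    · rw [hl] at hh
      exact absurd hh (by decide)
    · rw [hl] at hh
      exact absurd hh (by decide)
  set Gset : Finset (Fin N × Fin N) :=
    univ.filter (fun p => IsEvenGap lam p.1 p.2 ∨ IsOddGap lam p.1 p.2) with hGset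
  have hgap : ∀ p ∈ Gset, p.1 < p.2 ∧ lam p.1 ≠ 0 ∧ lam p.2 ≠ 0 ∧
      (∀ r, p.1 < r → r < p.2 → lam r = 0) := by
    intro p hp
    rw [hGset, Finset.mem_filter] at hp
    rcases hp.2 with h | h
    · exact ⟨h.1, h.2.1, h.2.2.1, h.2.2.2.2.1⟩
    · exact ⟨h.1, h.2.1, h.2.2.1, h.2.2.2.2.1⟩
  have hGdisj : ∀ p ∈ Gset, ∀ q ∈ Gset, p ≠ q → p.2 ≤ q.1 ∨ q.2 ≤ p.1 := by
    intro p hp q hq hpq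
    obtain ⟨hij, hi0, hj0, hz⟩ := hgap p hp
    obtain ⟨hij', hi0', hj0', hz'⟩ := hgap q hq
    rcases lt_trichotomy p.1 q.1 with h | h | h
    · left
      by_contra hc
      push_neg at hc
      exact hi0' (hz q.1 h hc)
    · rcases lt_trichotomy p.2 q.2 with h2 | h2 | h2
      · exact absurd (hz' p.2 (lt_of_eq_of_lt h.symm hij) h2) hj0
      · exact absurd (Prod.ext h h2) hpq
      · exact absurd (hz q.2 (lt_of_eq_of_lt h hij') h2) hj0'
    · right
      by_contra hc
      push_neg at hc
      exact hi0 (hz' p.1 h hc)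
  set S := g.roots with hS
  -- per-gap root count
  have hper : ∀ p ∈ Gset, ((p.2 : ℕ) - (p.1 : ℕ) - 1) + 1
      ≤ Multiset.card (S.filter (fun r => xi p.1 < r ∧ r < xi p.2)) := by
    intro p hp
    obtain ⟨hij, hi0, hj0, hz⟩ := hgap p hp
    have hcard1 : (p.2 : ℕ) - (p.1 : ℕ) - 1
        ≤ Multiset.card (S.filter (fun r => xi p.1 < r ∧ r < xi p.2)) := by
      have hsub : (Finset.Ioo p.1 p.2).image xi
          ⊆ (S.filter (fun r => xi p.1 < r ∧ r < xi p.2)).toFinset := by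
        intro x hx
        obtain ⟨rr, hrr, rfl⟩ := Finset.mem_image.mp hx
        rw [Finset.mem_Ioo] at hrr
        have heval : g.eval (xi rr) = 0 := hroot_of_zero rr (hz rr hrr.1 hrr.2)
        rw [Multiset.mem_toFinset, Multiset.mem_filter]
        exact ⟨mem_roots'.mpr ⟨hg, heval⟩, hmono _ _ hrr.1, hmono _ _ hrr.2⟩
      calc (p.2 : ℕ) - (p.1 : ℕ) - 1 = (Finset.Ioo p.1 p.2).card := (Fin.card_Ioo _ _).symm
        _ = ((Finset.Ioo p.1 p.2).image xi).card :=
            (Finset.card_image_of_injective _ hinj).symm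
        _ ≤ (S.filter (fun r => xi p.1 < r ∧ r < xi p.2)).toFinset.card :=
            Finset.card_le_card hsub
        _ ≤ Multiset.card (S.filter (fun r => xi p.1 < r ∧ r < xi p.2)) :=
            Multiset.toFinset_card_le _
    have hu : g.eval (xi p.1) ≠ 0 := hne_of_nonzero _ hi0
    have hv : g.eval (xi p.2) ≠ 0 := hne_of_nonzero _ hj0
    have hpar := parity_lemma (Multiset.card g.roots) g hg le_rfl (xi p.1) (xi p.2)
      (hmono _ _ hij) hu hv
    rw [hGset, Finset.mem_filter] at hp
    rcases hp.2 with he | ho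
    · -- even gap: opposite signs, odd number of roots in between
      have hprod : g.eval (xi p.1) * g.eval (xi p.2) < 0 := by
        apply mul_neg_of_sign' _ _ _ hv
        rw [hsign p.1, hsign p.2, he.2.2.2.1]
      have hparodd : ¬ Even (Multiset.card (S.filter (fun r => xi p.1 < r ∧ r < xi p.2))) := by
        rw [hS, hpar]
        exact not_lt.mpr hprod.le
      have heven : Even ((p.2 : ℕ) - (p.1 : ℕ) - 1) := he.2.2.2.2.2
      rw [Nat.even_iff] at heven
      rw [Nat.even_iff] at hparodd
      omega
    · -- odd gap: same signs, even number of roots in between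
      have hprod : 0 < g.eval (xi p.1) * g.eval (xi p.2) := by
        apply mul_pos_of_sign' _ _ _ hv
        rw [hsign p.1, hsign p.2, ho.2.2.2.1]
      have hpareven : Even (Multiset.card (S.filter (fun r => xi p.1 < r ∧ r < xi p.2))) := by
        rw [hS, hpar]
        exact hprod
      have hodd : Odd ((p.2 : ℕ) - (p.1 : ℕ) - 1) := ho.2.2.2.2.2
      rw [Nat.odd_iff] at hodd
      rw [Nat.even_iff] at hpareven
      omega
  set Zfin : Finset (Fin N) := univ.filter (fun i => lam i = 0) with hZfin
  set Zout : Finset (Fin N) := Zfin.filter (fun i => ¬ ∃ p ∈ Gset, p.1 < i ∧ i < p.2)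
    with hZout
  -- partition of the zero entries
  have hcardZ : Zfin.card = (∑ p ∈ Gset, ((p.2 : ℕ) - (p.1 : ℕ) - 1)) + Zout.card := by
    have hsplit := Finset.card_filter_add_card_filter_not
      (s := Zfin) (p := fun i => ∃ p ∈ Gset, p.1 < i ∧ i < p.2)
    have hbi : Zfin.filter (fun i => ∃ p ∈ Gset, p.1 < i ∧ i < p.2)
        = Gset.biUnion (fun p => Finset.Ioo p.1 p.2) := by
      ext i
      simp only [Finset.mem_filter, Finset.mem_biUnion, Finset.mem_Ioo, hZfin,
        Finset.mem_univ, true_and]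
      constructor
      · rintro ⟨-, p, hp, h1, h2⟩
        exact ⟨p, hp, h1, h2⟩
      · rintro ⟨p, hp, h1, h2⟩
        exact ⟨(hgap p hp).2.2.2 i h1 h2, p, hp, h1, h2⟩
    have hdisjB : ∀ p ∈ Gset, ∀ q ∈ Gset, p ≠ q →
        Disjoint (Finset.Ioo p.1 p.2) (Finset.Ioo q.1 q.2) := by
      intro p hp q hq hpq
      rw [Finset.disjoint_left]
      intro i hi hi'
      rw [Finset.mem_Ioo] at hi hi'
      rcases hGdisj p hp q hq hpq with h | h
      · exact absurd hi'.1 (not_lt.mpr (lt_of_lt_of_le hi.2 h).le)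
      · exact absurd hi.1 (not_lt.mpr (lt_of_lt_of_le hi'.2 h).le)
    have hcardB : (Gset.biUnion fun p => Finset.Ioo p.1 p.2).card
        = ∑ p ∈ Gset, ((p.2 : ℕ) - (p.1 : ℕ) - 1) := by
      rw [Finset.card_biUnion hdisjB]
      exact Finset.sum_congr rfl (fun p _ => Fin.card_Ioo _ _)
    rw [hbi, hcardB] at hsplit
    rw [hZout]
    omega
  -- the two families of roots are disjoint
  have hdisjPQ : ∀ r : ℝ, (∃ p ∈ Gset, xi p.1 < r ∧ r < xi p.2) →
      ¬ (∃ i ∈ Zout, r = xi i) := by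
    rintro r ⟨p, hp, h1, h2⟩ ⟨i, hi, rfl⟩
    rw [hZout, Finset.mem_filter] at hi
    exact hi.2 ⟨p, hp, hreflect _ _ h1, hreflect _ _ h2⟩
  have htwo := two_filter_le S (fun r => ∃ p ∈ Gset, xi p.1 < r ∧ r < xi p.2)
    (fun r => ∃ i ∈ Zout, r = xi i) hdisjPQ
  have hsum := multiset_sum_filter_le S Gset (fun p r => xi p.1 < r ∧ r < xi p.2)
    (by
      intro p hp q hq hpq r hr hr'
      rcases hGdisj p hp q hq hpq with h | h
      · have : xi p.2 ≤ xi q.1 := hmono_le _ _ h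
        linarith [hr.2, hr'.1]
      · have : xi q.2 ≤ xi p.1 := hmono_le _ _ h
        linarith [hr.1, hr'.2])
  have hsum' : ∑ p ∈ Gset, Multiset.card (S.filter (fun r => xi p.1 < r ∧ r < xi p.2))
      ≤ Multiset.card (S.filter (fun r => ∃ p ∈ Gset, xi p.1 < r ∧ r < xi p.2)) := hsum
  clear hsum
  have hQZcard : Zout.card ≤ Multiset.card (S.filter (fun r => ∃ i ∈ Zout, r = xi i)) := by
    have hsub : Zout.image xi ⊆ (S.filter (fun r => ∃ i ∈ Zout, r = xi i)).toFinset := by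
      intro x hx
      obtain ⟨i, hi, rfl⟩ := Finset.mem_image.mp hx
      have h0 : lam i = 0 := by
        have hh := hi
        rw [hZout, Finset.mem_filter, hZfin, Finset.mem_filter] at hh
        exact hh.1.2
      have heval : g.eval (xi i) = 0 := hroot_of_zero i h0
      rw [Multiset.mem_toFinset, Multiset.mem_filter]
      exact ⟨mem_roots'.mpr ⟨hg, heval⟩, i, hi, rfl⟩
    calc Zout.card = (Zout.image xi).card := (Finset.card_image_of_injective _ hinj).symm
      _ ≤ (S.filter (fun r => ∃ i ∈ Zout, r = xi i)).toFinset.card := Finset.card_le_card hsub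
      _ ≤ Multiset.card (S.filter (fun r => ∃ i ∈ Zout, r = xi i)) :=
          Multiset.toFinset_card_le _
  have hsum2 : ∑ p ∈ Gset, (((p.2 : ℕ) - (p.1 : ℕ) - 1) + 1)
      ≤ ∑ p ∈ Gset, Multiset.card (S.filter (fun r => xi p.1 < r ∧ r < xi p.2)) :=
    Finset.sum_le_sum hper
  have hsum3 : ∑ p ∈ Gset, (((p.2 : ℕ) - (p.1 : ℕ) - 1) + 1)
      = (∑ p ∈ Gset, ((p.2 : ℕ) - (p.1 : ℕ) - 1)) + Gset.card := by
    rw [Finset.sum_add_distrib, Finset.sum_const, smul_eq_mul, mul_one]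
  have hmval : mVal lam = Gset.card + Zfin.card := by
    have hGcard : Gset.card
        = (univ.filter fun p : Fin N × Fin N => IsEvenGap lam p.1 p.2).card
          + (univ.filter fun p : Fin N × Fin N => IsOddGap lam p.1 p.2).card := by
      rw [hGset, Finset.filter_or]
      apply Finset.card_union_of_disjoint
      rw [Finset.disjoint_left]
      intro p hpe hpo
      rw [Finset.mem_filter] at hpe hpo
      have h1 : Even ((p.2 : ℕ) - (p.1 : ℕ) - 1) := hpe.2.2.2.2.2.2
      have h2 : Odd ((p.2 : ℕ) - (p.1 : ℕ) - 1) := hpo.2.2.2.2.2.2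
      rw [Nat.even_iff] at h1
      rw [Nat.odd_iff] at h2
      omega
    rw [mVal, hGcard, hZfin]
  have hfinal : Multiset.card S = Multiset.card g.roots := by rw [hS]
  omega

/-- If `f` is a real polynomial whose second derivative is nonzero and
`λ''` is the sign vector of consecutive differences of slopes of secants of `f`
over points `t 1 < ⋯ < t n`, namely `λ''_i = sign (s (i-1) - s i)` for `2 ≤ i ≤ n-1`
(indexed below by `j : Fin (n-2)` with `i = j + 2`), then `deg f ≥ m(λ'') + 2`. -/
theorem natDegree_ge_mVal_add_two (n : ℕ) (hn : 3 ≤ n) (t : ℕ → ℝ)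
    (ht : ∀ i j, 1 ≤ i → i < j → j ≤ n → t i < t j)
    (f : Polynomial ℝ)
    (hf : Polynomial.derivative (Polynomial.derivative f) ≠ 0)
    (s : ℕ → ℝ)
    (hs : ∀ i, s i = (f.eval (t (i + 1)) - f.eval (t i)) / (t (i + 1) - t i))
    (lam : Fin (n - 2) → SignType)
    (hlam : ∀ j : Fin (n - 2), lam j = SignType.sign (s ((j : ℕ) + 1) - s ((j : ℕ) + 2))) :
    mVal lam + 2 ≤ f.natDegree := by
  classical
  set g := Polynomial.derivative (Polynomial.derivative f) with hg
  -- step 1: mean value theorem for the secants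
  have hθex : ∀ i : ℕ, ∃ c, 1 ≤ i → i + 1 ≤ n →
      (t i < c ∧ c < t (i + 1) ∧ (Polynomial.derivative f).eval c = s i) := by
    intro i
    by_cases h : 1 ≤ i ∧ i + 1 ≤ n
    · have hti : t i < t (i + 1) := ht i (i + 1) h.1 (Nat.lt_succ_self i) h.2
      obtain ⟨c, hc, hceq⟩ := exists_hasDerivAt_eq_slope (fun x => f.eval x)
        (fun x => (Polynomial.derivative f).eval x) hti
        (Polynomial.continuous f).continuousOn
        (fun x _ => Polynomial.hasDerivAt f x)
      exact ⟨c, fun _ _ => ⟨hc.1, hc.2, by rw [hs i]; exact hceq⟩⟩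
    · exact ⟨0, fun h1 h2 => absurd ⟨h1, h2⟩ h⟩
  choose θ hθ using hθex
  -- step 2: mean value theorem for the slopes
  have hξex : ∀ j : ℕ, ∃ c, j + 1 ≤ n - 2 →
      (θ (j + 1) < c ∧ c < θ (j + 2) ∧
        SignType.sign (g.eval c) = SignType.sign (s (j + 2) - s (j + 1))) := by
    intro j
    by_cases hj : j + 1 ≤ n - 2
    · have h1 := hθ (j + 1) (by omega) (by omega)
      have h2 := hθ (j + 2) (by omega) (by omega)
      have hab : θ (j + 1) < θ (j + 2) := by
        have e1 : θ (j + 1) < t (j + 1 + 1) := h1.2.1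
        have e2 : t (j + 2) < θ (j + 2) := h2.1
        exact lt_trans e1 e2
      obtain ⟨c, hc, hceq⟩ := exists_hasDerivAt_eq_slope
        (fun x => (Polynomial.derivative f).eval x) (fun x => g.eval x) hab
        (Polynomial.continuous (Polynomial.derivative f)).continuousOn
        (fun x _ => Polynomial.hasDerivAt (Polynomial.derivative f) x)
      refine ⟨c, fun _ => ⟨hc.1, hc.2, ?_⟩⟩
      rw [hceq, h1.2.2, h2.2.2]
      exact sign_div_pos' (sub_pos.mpr hab)
    · exact ⟨0, fun h => absurd h hj⟩
  choose ξ hξ using hξex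
  -- monotonicity of ξ
  have hstep : ∀ a : ℕ, a + 1 < n - 2 → ξ a < ξ (a + 1) := by
    intro a ha
    have h1 := hξ a (by omega)
    have h2 := hξ (a + 1) (by omega)
    have e1 : ξ a < θ (a + 2) := h1.2.1
    have e2 : θ (a + 1 + 1) < ξ (a + 1) := h2.1
    exact lt_trans e1 e2
  have hmono_nat : ∀ b, b < n - 2 → ∀ a, a < b → ξ a < ξ b := by
    intro b
    induction b with
    | zero => omega
    | succ k ih =>
      intro hk a ha
      rcases Nat.lt_succ_iff_lt_or_eq.mp ha with h | h
      · exact lt_trans (ih (by omega) a h) (hstep k hk)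
      · subst h
        exact hstep a hk
  -- apply the key lemma
  have hkey := key_lemma g hf lam (fun j : Fin (n - 2) => ξ (j : ℕ))
    (by
      intro i j hij
      exact hmono_nat (j : ℕ) j.isLt (i : ℕ) hij)
    (by
      intro j
      have hjlt : (j : ℕ) < n - 2 := j.isLt
      have hj := hξ (j : ℕ) (by omega)
      rw [hj.2.2, hlam j,
        show s ((j : ℕ) + 2) - s ((j : ℕ) + 1) = -(s ((j : ℕ) + 1) - s ((j : ℕ) + 2)) by ring,
        Left.sign_neg])
  -- degree bookkeeping
  have hcard : Multiset.card g.roots ≤ g.natDegree := Polynomial.card_roots' g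
  have hf' : Polynomial.derivative f ≠ 0 := by
    intro h
    rw [hg, h, Polynomial.derivative_zero] at hf
    exact hf rfl
  have hnd1 : (Polynomial.derivative f).natDegree ≠ 0 := by
    intro h
    exact hf (Polynomial.derivative_of_natDegree_zero h)
  have hnd0 : f.natDegree ≠ 0 := by
    intro h
    exact hf' (Polynomial.derivative_of_natDegree_zero h)
  have hlt1 : g.natDegree < (Polynomial.derivative f).natDegree :=
    Polynomial.natDegree_derivative_lt hnd1
  have hlt2 : (Polynomial.derivative f).natDegree < f.natDegree :=
    Polynomial.natDegree_derivative_lt hnd0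
  omega
end

section
/- Let n \ge 6. Consider real parameters t_1 < t_2 < \cdots < t_n with the fixed values t_2 = 2, t_3 = 3, t_4 = 4, t_5 = 5, and set c_i = \prod_{j \ne i} 1/(t_j - t_i). Then: (a) there exists a choice of the remaining parameters t_1, t_6, \ldots, t_n with c_3 + c_4 < 0; (b) there exists a choice with c_3 + c_4 > 0; and (c) there exists a choice with c_3 + c_4 = 0. (The equation c_3 + c_4 = 0, i.e. |c_3| = |c_4|, is exactly the condition for the subdivision \{\{2,3,4,5\}, \{1,2,5,6,\ldots,n\}\} of C(n,2) to be \pi-coherent for \pi : C(n,n-2) \to C(n,2), so its \pi-coherence depends on the choice of points on the moment curve.) -/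
/-!
With `t 1 = a` and `t 2, …, t 5 = 2, …, 5`, one has `c 3 = 1 / (2 (3 - a) Q₃)` and
`c 4 = -1 / (2 (4 - a) Q₄)`, where `Qᵢ = ∏_{6 ≤ j ≤ n} (t j - i)`. Taking `t 6, …, t n` to be
the consecutive numbers `2n - 6, …, 3n - 12`, the quotient `Q₃ / Q₄` telescopes to
`(3n - 15) / (2n - 10) = 3 / 2`, so `c 3 + c 4 = (a - 1) / (6 (3 - a) (4 - a) Q₄)` has the
sign of `a - 1`. The choices `a = 0`, `3 / 2` and `1` give the three cases.
-/

open Finset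

/-- The coefficient `c i = ∏_{j ≠ i, 1 ≤ j ≤ n} 1 / (t j - t i)` of the unique affine
dependence among the `n` points with parameters `t 1, …, t n` on the moment curve
in `ℝ^(n-2)`. -/
noncomputable def momentCoeff (n : ℕ) (t : ℕ → ℝ) (i : ℕ) : ℝ :=
  ∏ j ∈ (Finset.Icc 1 n).erase i, (t j - t i)⁻¹

/-- An admissible choice of parameters: `t 1 < t 2 < ⋯ < t n` with the fixed values
`t 2 = 2`, `t 3 = 3`, `t 4 = 4`, `t 5 = 5`. -/
def AdmissibleParams (n : ℕ) (t : ℕ → ℝ) : Prop :=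
  StrictMonoOn t (Set.Icc 1 n) ∧ t 2 = 2 ∧ t 3 = 3 ∧ t 4 = 4 ∧ t 5 = 5

lemma prod_Ioc_comp_succ_mul {M : Type*} [CommMonoid M] (f : ℕ → M) {a b : ℕ} (hab : a ≤ b) :
    (∏ j ∈ Ioc a b, f (j + 1)) * f (a + 1) = (∏ j ∈ Ioc a b, f j) * f (b + 1) := by
  induction b, hab using Nat.le_induction with
  | base => simp
  | succ b hab ih =>
    rw [prod_Ioc_succ_top hab, prod_Ioc_succ_top hab, mul_right_comm, ih, mul_right_comm]

lemma momentCoeff_eq_mul_inv_prod_Ioc (t : ℕ → ℝ) {n k i : ℕ} (hk : k ≤ n) (hi : i ≤ k) :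
    momentCoeff n t i =
      (∏ j ∈ (Icc 1 k).erase i, (t j - t i)⁻¹) * (∏ j ∈ Ioc k n, (t j - t i))⁻¹ := by
  have hsplit : (Icc 1 n).erase i = (Icc 1 k).erase i ∪ Ioc k n := by
    ext j; simp only [mem_erase, mem_Icc, mem_union, mem_Ioc]; omega
  have hdisj : Disjoint ((Icc 1 k).erase i) (Ioc k n) :=
    disjoint_left.2 fun j hj hj' => by simp only [mem_erase, mem_Icc, mem_Ioc] at hj hj'; omega
  rw [momentCoeff, hsplit, prod_union hdisj, prod_inv_distrib (s := Ioc k n)]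

lemma momentCoeff_three_add_four (t : ℕ → ℝ) {n : ℕ} (hn : 5 ≤ n)
    (h2 : t 2 = 2) (h3 : t 3 = 3) (h4 : t 4 = 4) (h5 : t 5 = 5) :
    momentCoeff n t 3 + momentCoeff n t 4 =
      (2 * (3 - t 1) * ∏ j ∈ Ioc 5 n, (t j - 3))⁻¹ -
        (2 * (4 - t 1) * ∏ j ∈ Ioc 5 n, (t j - 4))⁻¹ := by
  rw [momentCoeff_eq_mul_inv_prod_Ioc t hn (by norm_num),
    momentCoeff_eq_mul_inv_prod_Ioc t hn (by norm_num)]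
  have e3 : (Icc 1 5).erase 3 = {1, 2, 4, 5} := by decide
  have e4 : (Icc 1 5).erase 4 = {1, 2, 3, 5} := by decide
  simp only [e3, e4, prod_insert, prod_singleton, mem_insert, mem_singleton, h2, h3, h4, h5,
    prod_inv_distrib, mul_inv_rev, OfNat.one_ne_ofNat, Nat.reduceEqDiff, or_self,
    not_false_eq_true]
  rw [← neg_sub 3 (t 1), ← neg_sub 4 (t 1), inv_neg, inv_neg]
  ring

noncomputable def witnessParams (n : ℕ) (a : ℝ) : ℕ → ℝ :=
  fun j => if j ≤ 1 then a else if j ≤ 5 then j else 2 * n - 12 + j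

lemma witnessParams_admissible {n : ℕ} {a : ℝ} (ha : a < 2) :
    AdmissibleParams n (witnessParams n a) := by
  refine ⟨?_, by norm_num [witnessParams], by norm_num [witnessParams],
    by norm_num [witnessParams], by norm_num [witnessParams]⟩
  intro i ⟨hi1, hin⟩ j ⟨hj1, hjn⟩ hij
  have hijR : (i : ℝ) < j := by exact_mod_cast hij
  have hjnR : (j : ℝ) ≤ n := by exact_mod_cast hjn
  have hj2 : 1 < j → (2 : ℝ) ≤ j := fun h => by exact_mod_cast h
  have hj6 : 5 < j → (6 : ℝ) ≤ j := fun h => by exact_mod_cast h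
  have hi5 : i ≤ 5 → (i : ℝ) ≤ 5 := fun h => by exact_mod_cast h
  simp only [witnessParams]
  split_ifs <;>
    first | omega | linarith [hj2 (by omega)] | linarith [hj6 (by omega), hi5 (by omega)]

lemma witnessParams_of_five_lt {n j : ℕ} (a : ℝ) (hj : 5 < j) :
    witnessParams n a j = 2 * n - 12 + j := by
  simp only [witnessParams, if_neg (show ¬j ≤ 1 by omega), if_neg (show ¬j ≤ 5 by omega)]

lemma two_mul_prod_witnessParams_sub_three {n : ℕ} (a : ℝ) (hn : 6 ≤ n) :
    2 * ∏ j ∈ Ioc 5 n, (witnessParams n a j - 3) =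
      3 * ∏ j ∈ Ioc 5 n, (witnessParams n a j - 4) := by
  set f : ℕ → ℝ := fun j => 2 * n - 16 + j
  have h3 : ∏ j ∈ Ioc 5 n, (witnessParams n a j - 3) = ∏ j ∈ Ioc 5 n, f (j + 1) :=
    prod_congr rfl fun j hj => by
      rw [witnessParams_of_five_lt a (mem_Ioc.1 hj).1]; push_cast [f]; ring
  have h4 : ∏ j ∈ Ioc 5 n, (witnessParams n a j - 4) = ∏ j ∈ Ioc 5 n, f j :=
    prod_congr rfl fun j hj => by
      rw [witnessParams_of_five_lt a (mem_Ioc.1 hj).1]; ring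
  have htel := prod_Ioc_comp_succ_mul f (by omega : 5 ≤ n)
  rw [show f (5 + 1) = 2 * n - 10 by norm_num [f]; ring,
    show f (n + 1) = 3 * n - 15 by push_cast [f]; ring] at htel
  have hn5 : (n : ℝ) - 5 ≠ 0 := by
    have : (6 : ℝ) ≤ n := by exact_mod_cast hn
    linarith
  rw [h3, h4]
  apply mul_right_cancel₀ hn5
  linear_combination htel

lemma prod_witnessParams_sub_four_pos (n : ℕ) (a : ℝ) :
    0 < ∏ j ∈ Ioc 5 n, (witnessParams n a j - 4) :=
  prod_pos fun j hj => by
    obtain ⟨h5j, hjn⟩ := mem_Ioc.1 hj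
    have : (6 : ℝ) ≤ j := by exact_mod_cast h5j
    have : (j : ℝ) ≤ n := by exact_mod_cast hjn
    rw [witnessParams_of_five_lt a h5j]
    linarith

lemma momentCoeff_three_add_four_witnessParams {n : ℕ} {a : ℝ} (hn : 6 ≤ n) (ha : a < 3) :
    momentCoeff n (witnessParams n a) 3 + momentCoeff n (witnessParams n a) 4 =
      (a - 1) / (6 * (3 - a) * (4 - a) * ∏ j ∈ Ioc 5 n, (witnessParams n a j - 4)) := by
  rw [momentCoeff_three_add_four _ (by omega) (by norm_num [witnessParams])
    (by norm_num [witnessParams]) (by norm_num [witnessParams]) (by norm_num [witnessParams])]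
  have hQ3 := two_mul_prod_witnessParams_sub_three a hn
  rw [show witnessParams n a 1 = a by simp [witnessParams],
    show ∏ j ∈ Ioc 5 n, (witnessParams n a j - 3) =
      3 / 2 * ∏ j ∈ Ioc 5 n, (witnessParams n a j - 4) by linarith]
  have : 3 - a ≠ 0 := by linarith
  have : 4 - a ≠ 0 := by linarith
  field_simp
  ring

/-- For `n ≥ 6` there are admissible choices of parameters `t 1 < ⋯ < t n`
(with `t 2 = 2, t 3 = 3, t 4 = 4, t 5 = 5`) making `c 3 + c 4` negative, positive,
or zero respectively.  The equation `c 3 + c 4 = 0` is exactly the condition for the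
subdivision `{{2,3,4,5}, {1,2,5,6,…,n}}` of `C(n,2)` to be `π`-coherent for
`π : C(n,n-2) → C(n,2)`, so its `π`-coherence depends on the choice of points. -/
theorem exists_params_c3_add_c4_neg_pos_zero (n : ℕ) (hn : 6 ≤ n) :
    (∃ t : ℕ → ℝ, AdmissibleParams n t ∧
      momentCoeff n t 3 + momentCoeff n t 4 < 0) ∧
    (∃ t : ℕ → ℝ, AdmissibleParams n t ∧
      momentCoeff n t 3 + momentCoeff n t 4 > 0) ∧
    (∃ t : ℕ → ℝ, AdmissibleParams n t ∧
      momentCoeff n t 3 + momentCoeff n t 4 = 0) := by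
  refine ⟨⟨witnessParams n 0, witnessParams_admissible (by norm_num), ?_⟩,
    ⟨witnessParams n (3 / 2), witnessParams_admissible (by norm_num), ?_⟩,
    ⟨witnessParams n 1, witnessParams_admissible (by norm_num), ?_⟩⟩ <;>
    rw [momentCoeff_three_add_four_witnessParams hn (by norm_num)]
  · exact div_neg_of_neg_of_pos (by norm_num)
      (mul_pos (by norm_num) (prod_witnessParams_sub_four_pos n _))
  · exact div_pos (by norm_num) (mul_pos (by norm_num) (prod_witnessParams_sub_four_pos n _))
  · rw [sub_self, zero_div]
end

section
/- Let E be a finite-dimensional real inner product space (e.g. E = EuclideanSpace \mathbb{R} (Fin d) with d \ge 1), and let C be a nonempty convex subset of the open unit ball Metric.ball 0 1 in E. Then the unit sphere Metric.sphere 0 1 is a deformation retract of Metric.closedBall 0 1 \setminus C; in particular, the subspace Metric.closedBall 0 1 \setminus C is homotopy equivalent to Metric.sphere 0 1. -/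
/-!
Pick `c ∈ C`. Every point `x ≠ c` of the closed unit ball is pushed along the ray from `c`
through `x` until it hits the unit sphere. The ray meets the sphere exactly once, at the positive
root of a quadratic, so the exit parameter depends continuously on `x` and equals `1` on the
sphere. The pushed points stay in the closed ball, and they avoid `C`: a point of `C` beyond `x`
on the ray would put `x` in `C` by convexity.
-/

open Metric
open scoped RealInnerProductSpace

section DeformationRetract

variable {Z : Type*} [TopologicalSpace Z]

def IsDeformationRetract (A X : Set Z) : Prop :=
  ∃ H : X × unitInterval → X, Continuous H ∧ (∀ x, H (x, 0) = x) ∧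
    (∀ x, (H (x, 1) : Z) ∈ A) ∧ ∀ x : X, (x : Z) ∈ A → H (x, 1) = x

theorem IsDeformationRetract.nonempty_homotopyEquiv {A X : Set Z}
    (h : IsDeformationRetract A X) (hAX : A ⊆ X) :
    Nonempty (ContinuousMap.HomotopyEquiv X A) := by
  obtain ⟨H, hH, h0, h1, hfix⟩ := h
  let i : C(A, X) := ⟨Set.inclusion hAX, continuous_inclusion hAX⟩
  let r : C(X, A) := ⟨fun x => ⟨H (x, 1), h1 x⟩, by fun_prop⟩
  have hri : r.comp i = ContinuousMap.id A := by
    ext a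
    exact congrArg (Subtype.val : X → Z) (hfix (i a) a.2)
  have hir : (ContinuousMap.id X).Homotopic (i.comp r) :=
    ⟨⟨⟨fun p => H (p.2, p.1), by fun_prop⟩, h0, fun _ => rfl⟩⟩
  exact ⟨⟨r, i, hir.symm, hri ▸ ContinuousMap.Homotopic.refl _⟩⟩

end DeformationRetract

theorem StarConvex.add_smul_sub_notMem {E : Type*} [AddCommGroup E] [Module ℝ E] {s : Set E}
    {c x : E} (hs : StarConvex ℝ c s) (hx : x ∉ s) {l : ℝ} (hl : 1 ≤ l) :
    c + l • (x - c) ∉ s := by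
  intro hmem
  have hl0 : l ≠ 0 := by positivity
  refine hx ?_
  convert hs.add_smul_sub_mem hmem (t := l⁻¹) (by positivity) (inv_le_one_of_one_le₀ hl)
    using 1
  rw [add_sub_cancel_left, smul_smul, inv_mul_cancel₀ hl0, one_smul, add_sub_cancel]

section InnerProductSpace

variable {E : Type*} [NormedAddCommGroup E] [InnerProductSpace ℝ E]

/-- The positive root `t` of `‖c + t • v‖ = 1`, for `‖c‖ < 1` and `v ≠ 0`. -/
noncomputable def rayExitParam (c v : E) : ℝ :=
  (-⟪c, v⟫ + √(⟪c, v⟫ ^ 2 + ‖v‖ ^ 2 * (1 - ‖c‖ ^ 2))) / ‖v‖ ^ 2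

theorem norm_sq_mul_norm_add_smul_sq_sub_one (c v : E) (t : ℝ) :
    ‖v‖ ^ 2 * (‖c + t • v‖ ^ 2 - 1) =
      (‖v‖ ^ 2 * t + ⟪c, v⟫) ^ 2 - (⟪c, v⟫ ^ 2 + ‖v‖ ^ 2 * (1 - ‖c‖ ^ 2)) := by
  rw [norm_add_sq_real, real_inner_smul_right, norm_smul, Real.norm_eq_abs, mul_pow, sq_abs]
  ring

theorem norm_sq_mul_rayExitParam {c v : E} (hv : v ≠ 0) :
    ‖v‖ ^ 2 * rayExitParam c v =
      -⟪c, v⟫ + √(⟪c, v⟫ ^ 2 + ‖v‖ ^ 2 * (1 - ‖c‖ ^ 2)) :=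
  mul_div_cancel₀ _ (by positivity)

theorem continuousOn_rayExitParam (c : E) : ContinuousOn (rayExitParam c) {0}ᶜ :=
  ContinuousOn.div (by fun_prop) (by fun_prop) fun _ hv => by simpa using hv

theorem one_le_rayExitParam {c v : E} (hv : v ≠ 0) (h : ‖c + v‖ ≤ 1) :
    1 ≤ rayExitParam c v := by
  have ha : 0 < ‖v‖ ^ 2 := by positivity
  have hq := norm_sq_mul_norm_add_smul_sq_sub_one c v 1
  rw [one_smul, mul_one] at hq
  have h2 : ‖c + v‖ ^ 2 ≤ 1 := pow_le_one₀ (norm_nonneg _) h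
  have hle : ‖v‖ ^ 2 + ⟪c, v⟫ ≤ √(⟪c, v⟫ ^ 2 + ‖v‖ ^ 2 * (1 - ‖c‖ ^ 2)) :=
    (le_abs_self _).trans (Real.abs_le_sqrt (by nlinarith))
  have hS := norm_sq_mul_rayExitParam (c := c) hv
  exact le_of_mul_le_mul_left (by linarith) ha

section RayExitParam

variable {c v : E} (hc : ‖c‖ < 1) (hv : v ≠ 0)
include hc hv

theorem abs_inner_lt_sqrt_of_norm_lt_one :
    |⟪c, v⟫| < √(⟪c, v⟫ ^ 2 + ‖v‖ ^ 2 * (1 - ‖c‖ ^ 2)) := by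
  rw [← Real.sqrt_sq_eq_abs]
  have : 0 < ‖v‖ ^ 2 * (1 - ‖c‖ ^ 2) := by
    have : ‖c‖ ^ 2 < 1 := by nlinarith [norm_nonneg c]
    have : 0 < ‖v‖ := norm_pos_iff.2 hv
    positivity
  exact Real.sqrt_lt_sqrt (sq_nonneg _) (by linarith)

theorem rayExitParam_pos : 0 < rayExitParam c v := by
  have h := abs_inner_lt_sqrt_of_norm_lt_one hc hv
  have : 0 < ‖v‖ ^ 2 * rayExitParam c v := by
    rw [norm_sq_mul_rayExitParam hv]
    linarith [le_abs_self ⟪c, v⟫]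
  exact pos_of_mul_pos_right this (by positivity)

theorem norm_add_smul_eq_one_iff {t : ℝ} (ht : 0 ≤ t) :
    ‖c + t • v‖ = 1 ↔ t = rayExitParam c v := by
  have ha : 0 < ‖v‖ ^ 2 := by positivity
  have hc2 : ‖c‖ ^ 2 ≤ 1 := by nlinarith [norm_nonneg c]
  have hd : 0 ≤ ⟪c, v⟫ ^ 2 + ‖v‖ ^ 2 * (1 - ‖c‖ ^ 2) :=
    add_nonneg (sq_nonneg _) (mul_nonneg ha.le (by linarith))
  rw [← pow_eq_one_iff_of_nonneg (norm_nonneg _) two_ne_zero, ← sub_eq_zero,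
    ← mul_eq_zero_iff_left ha.ne', norm_sq_mul_norm_add_smul_sq_sub_one, ← Real.sq_sqrt hd,
    sub_eq_zero, sq_eq_sq_iff_eq_or_eq_neg]
  have hS := norm_sq_mul_rayExitParam (c := c) hv
  constructor
  · rintro (h | h)
    · exact mul_left_cancel₀ ha.ne' (by linarith)
    · -- the other root of the quadratic is negative
      nlinarith [abs_inner_lt_sqrt_of_norm_lt_one hc hv, neg_abs_le ⟪c, v⟫, mul_nonneg ha.le ht]
  · rintro rfl
    left
    linarith

theorem norm_add_rayExitParam_smul : ‖c + rayExitParam c v • v‖ = 1 :=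
  (norm_add_smul_eq_one_iff hc hv (rayExitParam_pos hc hv).le).2 rfl

theorem rayExitParam_eq_one (h : ‖c + v‖ = 1) : rayExitParam c v = 1 :=
  ((norm_add_smul_eq_one_iff hc hv zero_le_one).1 (by rwa [one_smul])).symm

theorem norm_add_smul_le_one {t : ℝ} (ht₀ : 0 ≤ t) (ht : t ≤ rayExitParam c v) :
    ‖c + t • v‖ ≤ 1 := by
  have hS := rayExitParam_pos hc hv
  have hmem := (convex_closedBall (0 : E) 1).add_smul_sub_mem (mem_closedBall_zero_iff.2 hc.le)
    (mem_closedBall_zero_iff.2 (norm_add_rayExitParam_smul hc hv).le)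
    (t := t / rayExitParam c v) ⟨by positivity, div_le_one_of_le₀ ht hS.le⟩
  rwa [add_sub_cancel_left, smul_smul, div_mul_cancel₀ _ hS.ne', mem_closedBall_zero_iff] at hmem

end RayExitParam

noncomputable def pushToSphere (c x : E) (t : ℝ) : E :=
  c + (1 + t * (rayExitParam c (x - c) - 1)) • (x - c)

theorem pushToSphere_zero (c x : E) : pushToSphere c x 0 = x := by
  simp [pushToSphere]

theorem pushToSphere_one (c x : E) :
    pushToSphere c x 1 = c + rayExitParam c (x - c) • (x - c) := by
  simp [pushToSphere]

theorem continuousOn_pushToSphere (c : E) :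
    ContinuousOn (fun p : E × ℝ => pushToSphere c p.1 p.2) {p | p.1 ≠ c} := by
  have h : ContinuousOn (fun p : E × ℝ => rayExitParam c (p.1 - c)) {p | p.1 ≠ c} :=
    (continuousOn_rayExitParam c).comp (by fun_prop) fun p hp => sub_ne_zero.2 hp
  unfold pushToSphere
  fun_prop

theorem pushToSphere_mem_closedBall_diff {s : Set E} {c x : E} (hs : StarConvex ℝ c s)
    (hcs : c ∈ s) (hc : ‖c‖ < 1) (hx : x ∈ closedBall (0 : E) 1 \ s) {t : ℝ}
    (ht : t ∈ unitInterval) : pushToSphere c x t ∈ closedBall (0 : E) 1 \ s := by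
  have hv : x - c ≠ 0 := sub_ne_zero.2 (ne_of_mem_of_not_mem hcs hx.2).symm
  have hS : 1 ≤ rayExitParam c (x - c) :=
    one_le_rayExitParam hv (by simpa using hx.1)
  have hl₁ : 1 ≤ 1 + t * (rayExitParam c (x - c) - 1) := by nlinarith [ht.1]
  have hl₂ : 1 + t * (rayExitParam c (x - c) - 1) ≤ rayExitParam c (x - c) := by
    nlinarith [ht.2]
  exact ⟨mem_closedBall_zero_iff.2 (norm_add_smul_le_one hc hv (by linarith) hl₂),
    hs.add_smul_sub_notMem hx.2 hl₁⟩

theorem isDeformationRetract_sphere_closedBall_diff {s : Set E} {c : E} (hs : StarConvex ℝ c s)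
    (hcs : c ∈ s) (hc : ‖c‖ < 1) :
    IsDeformationRetract (sphere (0 : E) 1) (closedBall (0 : E) 1 \ s) := by
  have hxc (x : ↥(closedBall (0 : E) 1 \ s)) : (x : E) ≠ c :=
    (ne_of_mem_of_not_mem hcs x.2.2).symm
  refine ⟨fun p => ⟨pushToSphere c p.1 p.2,
    pushToSphere_mem_closedBall_diff hs hcs hc p.1.2 p.2.2⟩, ?_, fun x => ?_, fun x => ?_,
    fun x hx => ?_⟩
  · have hval : Continuous fun p : ↥(closedBall (0 : E) 1 \ s) × unitInterval =>
        ((p.1 : E), (p.2 : ℝ)) := by fun_prop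
    exact ((continuousOn_pushToSphere c).comp_continuous hval fun p => hxc p.1).subtype_mk _
  · ext
    exact pushToSphere_zero c x
  · simp [pushToSphere_one, norm_add_rayExitParam_smul hc (sub_ne_zero.2 (hxc x))]
  · ext
    simp [pushToSphere_one, rayExitParam_eq_one hc (sub_ne_zero.2 (hxc x)) (by simpa using hx)]

end InnerProductSpace

theorem sphere_deformation_retract_of_closedBall_diff_convex_general
    {E : Type*} [NormedAddCommGroup E] [InnerProductSpace ℝ E]
    (C : Set E) (hne : C.Nonempty) (hconv : Convex ℝ C)
    (hsub : C ⊆ Metric.ball (0 : E) 1) :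
    (∃ H : ↥(Metric.closedBall (0 : E) 1 \ C) × unitInterval →
        ↥(Metric.closedBall (0 : E) 1 \ C),
      Continuous H ∧
      (∀ x : ↥(Metric.closedBall (0 : E) 1 \ C), H (x, 0) = x) ∧
      (∀ x : ↥(Metric.closedBall (0 : E) 1 \ C),
        (H (x, 1) : E) ∈ Metric.sphere (0 : E) 1) ∧
      (∀ x : ↥(Metric.closedBall (0 : E) 1 \ C),
        (x : E) ∈ Metric.sphere (0 : E) 1 → H (x, 1) = x)) ∧
    Nonempty (ContinuousMap.HomotopyEquiv
      ↥(Metric.closedBall (0 : E) 1 \ C) ↥(Metric.sphere (0 : E) 1)) := by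
  obtain ⟨c, hcC⟩ := hne
  have hc : ‖c‖ < 1 := by simpa using hsub hcC
  have hdr := isDeformationRetract_sphere_closedBall_diff (hconv.starConvex hcC) hcC hc
  have hsphere : sphere (0 : E) 1 ⊆ closedBall 0 1 \ C := fun y hy =>
    ⟨sphere_subset_closedBall hy, fun hyC => (mem_ball.1 (hsub hyC)).ne hy⟩
  exact ⟨hdr, hdr.nonempty_homotopyEquiv hsphere⟩

/-- If `C` is a nonempty convex subset of the open unit ball of a finite-dimensional
real inner product space `E`, then the unit sphere is a deformation retract of
`closedBall 0 1 \ C`; in particular these two spaces are homotopy equivalent. -/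
theorem sphere_deformation_retract_of_closedBall_diff_convex
    {E : Type*} [NormedAddCommGroup E] [InnerProductSpace ℝ E] [FiniteDimensional ℝ E]
    (C : Set E) (hne : C.Nonempty) (hconv : Convex ℝ C)
    (hsub : C ⊆ Metric.ball (0 : E) 1) :
    (∃ H : ↥(Metric.closedBall (0 : E) 1 \ C) × unitInterval →
        ↥(Metric.closedBall (0 : E) 1 \ C),
      Continuous H ∧
      (∀ x : ↥(Metric.closedBall (0 : E) 1 \ C), H (x, 0) = x) ∧
      (∀ x : ↥(Metric.closedBall (0 : E) 1 \ C),
        (H (x, 1) : E) ∈ Metric.sphere (0 : E) 1) ∧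
      (∀ x : ↥(Metric.closedBall (0 : E) 1 \ C),
        (x : E) ∈ Metric.sphere (0 : E) 1 → H (x, 1) = x)) ∧
    Nonempty (ContinuousMap.HomotopyEquiv
      ↥(Metric.closedBall (0 : E) 1 \ C) ↥(Metric.sphere (0 : E) 1)) :=
  sphere_deformation_retract_of_closedBall_diff_convex_general C hne hconv hsub
end

section
/- Let d \ge 2, let f : \mathbb{R}^d \to \mathbb{R} be a nonzero linear functional, and let U^+ be a nonempty convex subset of \mathbb{R}^d which is closed under multiplication by positive scalars (x \in U^+ and c > 0 imply c \cdot x \in U^+) and satisfies f(x) > 0 for all x \in U^+. Let H^+ = S^{d-1} \cap \{x : f(x) \ge 0\} be the closed hemisphere and S^{d-2} = S^{d-1} \cap \{x : f(x) = 0\} the equatorial sphere, where S^{d-1} is the unit sphere in \mathbb{R}^d. Then S^{d-2} is a deformation retract of H^+ \setminus U^+; in particular, H^+ \setminus U^+ is homotopy equivalent to S^{d-2}. -/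
/-- The closed hemisphere `H⁺ = S^{d-1} ∩ {x : f x ≥ 0}` determined by the linear
functional `f`, minus the set `U⁺`. -/
def hemisphereDiff (d : ℕ) (f : EuclideanSpace ℝ (Fin d) →ₗ[ℝ] ℝ)
    (U : Set (EuclideanSpace ℝ (Fin d))) : Set (EuclideanSpace ℝ (Fin d)) :=
  (Metric.sphere (0 : EuclideanSpace ℝ (Fin d)) 1 ∩ {x | 0 ≤ f x}) \ U

/-- The equatorial sphere `S^{d-2} = S^{d-1} ∩ {x : f x = 0}` determined by the
linear functional `f`. -/
def equatorialSphere (d : ℕ) (f : EuclideanSpace ℝ (Fin d) →ₗ[ℝ] ℝ) :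
    Set (EuclideanSpace ℝ (Fin d)) :=
  Metric.sphere (0 : EuclideanSpace ℝ (Fin d)) 1 ∩ {x | f x = 0}

/-!
Pick `u ∈ U⁺`. Sliding a point `x` of `H⁺ \ U⁺` along `-u` to the hyperplane `f = 0`, via
`x - t (f x / f u) u`, keeps `f ≥ 0`, never hits `0`, and never enters `U⁺`: the point removed
is `t (f x / f u) u`, which lies in the convex cone `U⁺` (or is `0`), and a convex cone is
closed under addition. Since `U⁺` is a cone, radial projection back to the sphere also avoids
`U⁺`, which gives the deformation retraction onto the equator.
-/

open unitInterval

section ConvexCone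

variable {E : Type*} [AddCommGroup E] [Module ℝ E] {U : Set E}

theorem Convex.add_mem_of_forall_smul_mem (hconv : Convex ℝ U)
    (hcone : ∀ x ∈ U, ∀ c : ℝ, 0 < c → c • x ∈ U) {a b : E} (ha : a ∈ U) (hb : b ∈ U) :
    a + b ∈ U := by
  have hull_subset : (ConvexCone.hull ℝ U : Set E) ⊆ U := by
    rw [ConvexCone.coe_hull_of_convex hconv]
    rintro _ ⟨r, hr, y, hy, rfl⟩
    exact hcone y hy r hr
  exact hull_subset <|
    (ConvexCone.hull ℝ U).add_mem (ConvexCone.subset_hull ha) (ConvexCone.subset_hull hb)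

variable (hcone : ∀ x ∈ U, ∀ c : ℝ, 0 < c → c • x ∈ U) {x u : E} {s : ℝ}
include hcone

theorem sub_smul_ne_zero_of_notMem (hu : u ∈ U) (hx : x ∉ U) (hx0 : x ≠ 0) (hs : 0 ≤ s) :
    x - s • u ≠ 0 := by
  rcases hs.eq_or_lt with rfl | hs
  · simpa using hx0
  · rw [sub_ne_zero]
    rintro rfl
    exact hx (hcone u hu s hs)

variable (hconv : Convex ℝ U)
include hconv

theorem Convex.sub_smul_notMem (hu : u ∈ U) (hx : x ∉ U) (hs : 0 ≤ s) :
    x - s • u ∉ U := by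
  rcases hs.eq_or_lt with rfl | hs
  · simpa using hx
  · intro hxu
    exact hx (by simpa using hconv.add_mem_of_forall_smul_mem hcone hxu (hcone u hu s hs))

end ConvexCone

section Slide

variable {E : Type*} [AddCommGroup E] [Module ℝ E] (f : E →ₗ[ℝ] ℝ) (u : E)

/-- Moves `x` along `-u` by the fraction `t` of the way to `ker f`; at `t = 1` this is the
projection onto `ker f` along `u`. -/
noncomputable def slideToKer (t : ℝ) (x : E) : E :=
  x - (t * (f x / f u)) • u

variable {f u}

theorem map_slideToKer (hu : f u ≠ 0) (t : ℝ) (x : E) :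
    f (slideToKer f u t x) = (1 - t) * f x := by
  simp only [slideToKer, map_sub, map_smul, smul_eq_mul]
  field_simp

@[simp]
theorem slideToKer_zero (x : E) : slideToKer f u 0 x = x := by
  simp [slideToKer]

theorem slideToKer_of_map_eq_zero (t : ℝ) {x : E} (hx : f x = 0) : slideToKer f u t x = x := by
  simp [slideToKer, hx]

variable {U : Set E} (hcone : ∀ x ∈ U, ∀ c : ℝ, 0 < c → c • x ∈ U) (hu : u ∈ U)
  (hfu : 0 < f u) {t : ℝ} (ht : 0 ≤ t) {x : E} (hx : x ∉ U) (hfx : 0 ≤ f x)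
include hcone hu hfu ht hx hfx

theorem slideToKer_ne_zero (hx0 : x ≠ 0) : slideToKer f u t x ≠ 0 :=
  sub_smul_ne_zero_of_notMem hcone hu hx hx0 (mul_nonneg ht (div_nonneg hfx hfu.le))

theorem slideToKer_notMem (hconv : Convex ℝ U) : slideToKer f u t x ∉ U :=
  hconv.sub_smul_notMem hcone hu hx (mul_nonneg ht (div_nonneg hfx hfu.le))

end Slide

section DeformationRetraction

variable {Y : Type*} [TopologicalSpace Y] {X : Set Y}

def IsDeformationRetraction (A : Set Y) (H : X × I → X) : Prop :=
  Continuous H ∧ (∀ x, H (x, 0) = x) ∧ (∀ x, (H (x, 1) : Y) ∈ A) ∧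
    ∀ x : X, (x : Y) ∈ A → H (x, 1) = x

theorem IsDeformationRetraction.nonempty_homotopyEquiv {A : Set Y} {H : X × I → X}
    (hH : IsDeformationRetraction A H) (hAX : A ⊆ X) :
    Nonempty (ContinuousMap.HomotopyEquiv X A) := by
  obtain ⟨hcont, hzero, hone, hfix⟩ := hH
  let r : C(X, A) := ⟨fun x => ⟨H (x, 1), hone x⟩, by fun_prop⟩
  refine ⟨{ toFun := r, invFun := ContinuousMap.inclusion hAX, left_inv := ?_, right_inv := ?_ }⟩
  · exact ⟨(ContinuousMap.Homotopy.mk ⟨fun p => H (p.2, p.1), by fun_prop⟩ hzero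
      fun _ => rfl).symm⟩
  · convert ContinuousMap.Homotopic.refl (ContinuousMap.id A)
    ext a
    show (H (Set.inclusion hAX a, 1) : Y) = a
    rw [hfix _ a.2]

end DeformationRetraction

section Hemisphere

variable {d : ℕ} {f : EuclideanSpace ℝ (Fin d) →ₗ[ℝ] ℝ} {U : Set (EuclideanSpace ℝ (Fin d))}

theorem inv_norm_smul_mem_hemisphereDiff (hcone : ∀ x ∈ U, ∀ c : ℝ, 0 < c → c • x ∈ U)
    {y : EuclideanSpace ℝ (Fin d)} (hy0 : y ≠ 0) (hfy : 0 ≤ f y) (hyU : y ∉ U) :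
    ‖y‖⁻¹ • y ∈ hemisphereDiff d f U := by
  have hy : 0 < ‖y‖ := norm_pos_iff.2 hy0
  refine ⟨⟨?_, ?_⟩, fun h => hyU ?_⟩
  · simp [norm_smul, hy.ne']
  · show 0 ≤ f (‖y‖⁻¹ • y)
    rw [map_smul, smul_eq_mul]
    exact mul_nonneg (inv_nonneg.2 hy.le) hfy
  · simpa [smul_smul, hy.ne'] using hcone _ h ‖y‖ hy

theorem equatorialSphere_subset_hemisphereDiff (hpos : ∀ x ∈ U, 0 < f x) :
    equatorialSphere d f ⊆ hemisphereDiff d f U :=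
  fun y ⟨hys, (hyf : f y = 0)⟩ => ⟨⟨hys, hyf.ge⟩, fun hyU => (hpos y hyU).ne' hyf⟩

theorem exists_isDeformationRetraction_hemisphereDiff (hne : U.Nonempty) (hconv : Convex ℝ U)
    (hcone : ∀ x ∈ U, ∀ c : ℝ, 0 < c → c • x ∈ U) (hpos : ∀ x ∈ U, 0 < f x) :
    ∃ H : hemisphereDiff d f U × I → hemisphereDiff d f U,
      IsDeformationRetraction (equatorialSphere d f) H := by
  obtain ⟨u, hu⟩ := hne
  have hfu : 0 < f u := hpos u hu
  let g (p : hemisphereDiff d f U × I) := slideToKer f u p.2 p.1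
  have hg_ne (p) : g p ≠ 0 :=
    slideToKer_ne_zero hcone hu hfu p.2.2.1 p.1.2.2 p.1.2.1.2
      (Metric.ne_of_mem_sphere p.1.2.1.1 one_ne_zero)
  have hg_mem (p) : ‖g p‖⁻¹ • g p ∈ hemisphereDiff d f U := by
    refine inv_norm_smul_mem_hemisphereDiff hcone (hg_ne p) ?_
      (slideToKer_notMem hcone hu hfu p.2.2.1 p.1.2.2 p.1.2.1.2 hconv)
    rw [map_slideToKer hfu.ne']
    exact mul_nonneg (sub_nonneg.2 p.2.2.2) p.1.2.1.2
  refine ⟨fun p => ⟨‖g p‖⁻¹ • g p, hg_mem p⟩, ?_, ?_, ?_, ?_⟩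
  · have hf : Continuous f := f.continuous_of_finiteDimensional
    have hg : Continuous g := by unfold g slideToKer; fun_prop
    exact ((hg.norm.inv₀ fun p => norm_ne_zero_iff.2 (hg_ne p)).smul hg).subtype_mk _
  · intro x
    apply Subtype.ext
    simp [g, mem_sphere_zero_iff_norm.1 x.2.1.1]
  · intro x
    refine ⟨(hg_mem _).1.1, ?_⟩
    show f (_ • _) = 0
    simp [g, map_slideToKer hfu.ne']
  · rintro x ⟨-, hx⟩
    apply Subtype.ext
    simp [g, slideToKer_of_map_eq_zero _ hx, mem_sphere_zero_iff_norm.1 x.2.1.1]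

end Hemisphere

theorem equator_deformation_retract_of_hemisphere_diff_general
    (d : ℕ) (f : EuclideanSpace ℝ (Fin d) →ₗ[ℝ] ℝ)
    (U : Set (EuclideanSpace ℝ (Fin d))) (hne : U.Nonempty) (hconv : Convex ℝ U)
    (hcone : ∀ x ∈ U, ∀ c : ℝ, 0 < c → c • x ∈ U)
    (hpos : ∀ x ∈ U, 0 < f x) :
    (∃ H : ↥(hemisphereDiff d f U) × unitInterval → ↥(hemisphereDiff d f U),
      Continuous H ∧
      (∀ x : ↥(hemisphereDiff d f U), H (x, 0) = x) ∧
      (∀ x : ↥(hemisphereDiff d f U),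
        (H (x, 1) : EuclideanSpace ℝ (Fin d)) ∈ equatorialSphere d f) ∧
      (∀ x : ↥(hemisphereDiff d f U),
        (x : EuclideanSpace ℝ (Fin d)) ∈ equatorialSphere d f → H (x, 1) = x)) ∧
    Nonempty (ContinuousMap.HomotopyEquiv
      ↥(hemisphereDiff d f U) ↥(equatorialSphere d f)) := by
  obtain ⟨H, hH⟩ := exists_isDeformationRetraction_hemisphereDiff hne hconv hcone hpos
  exact ⟨⟨H, hH⟩, hH.nonempty_homotopyEquiv (equatorialSphere_subset_hemisphereDiff hpos)⟩

/-- Let `f` be a nonzero linear functional on `ℝ^d` (`d ≥ 2`) and `U⁺` a nonempty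
convex subset, closed under multiplication by positive scalars, on which `f` is
positive.  Then the equatorial sphere `S^{d-1} ∩ {f = 0}` is a deformation retract
of `H⁺ \ U⁺`, where `H⁺ = S^{d-1} ∩ {f ≥ 0}`; in particular the two spaces are
homotopy equivalent. -/
theorem equator_deformation_retract_of_hemisphere_diff
    (d : ℕ) (hd : 2 ≤ d) (f : EuclideanSpace ℝ (Fin d) →ₗ[ℝ] ℝ) (hf : f ≠ 0)
    (U : Set (EuclideanSpace ℝ (Fin d))) (hne : U.Nonempty) (hconv : Convex ℝ U)
    (hcone : ∀ x ∈ U, ∀ c : ℝ, 0 < c → c • x ∈ U)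
    (hpos : ∀ x ∈ U, 0 < f x) :
    (∃ H : ↥(hemisphereDiff d f U) × unitInterval → ↥(hemisphereDiff d f U),
      Continuous H ∧
      (∀ x : ↥(hemisphereDiff d f U), H (x, 0) = x) ∧
      (∀ x : ↥(hemisphereDiff d f U),
        (H (x, 1) : EuclideanSpace ℝ (Fin d)) ∈ equatorialSphere d f) ∧
      (∀ x : ↥(hemisphereDiff d f U),
        (x : EuclideanSpace ℝ (Fin d)) ∈ equatorialSphere d f → H (x, 1) = x)) ∧
    Nonempty (ContinuousMap.HomotopyEquiv
      ↥(hemisphereDiff d f U) ↥(equatorialSphere d f)) :=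
  equator_deformation_retract_of_hemisphere_diff_general d f U hne hconv hcone hpos
end

section
/- Let d \ge 2 and let f : \mathbb{R}^d \to \mathbb{R} be a nonzero linear functional. Let U^+ and U^- be nonempty convex subsets of \mathbb{R}^d, each closed under multiplication by positive scalars, such that f(x) > 0 for all x \in U^+ and f(x) < 0 for all x \in U^-. Then the subspace S^{d-1} \setminus (U^+ \cup U^-) of the unit sphere S^{d-1} is homotopy equivalent to the equatorial sphere S^{d-1} \cap \{x : f(x) = 0\} (a sphere of dimension d-2). In fact, the equatorial sphere is a deformation retract of S^{d-1} \setminus (U^+ \cup U^-). -/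
/-- The unit sphere `S^{d-1}` minus the union `U⁺ ∪ U⁻`. -/
def sphereDiff (d : ℕ) (Uplus Uminus : Set (EuclideanSpace ℝ (Fin d))) :
    Set (EuclideanSpace ℝ (Fin d)) :=
  Metric.sphere (0 : EuclideanSpace ℝ (Fin d)) 1 \ (Uplus ∪ Uminus)

/-- Let `f` be a nonzero linear functional on `ℝ^d` (`d ≥ 2`), and let `U⁺`, `U⁻` be
nonempty convex subsets, each closed under multiplication by positive scalars, with
`f > 0` on `U⁺` and `f < 0` on `U⁻`.  Then the equatorial sphere `S^{d-1} ∩ {f = 0}`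
(a sphere of dimension `d-2`) is a deformation retract of `S^{d-1} \ (U⁺ ∪ U⁻)`;
in particular the two spaces are homotopy equivalent. -/
theorem equator_deformation_retract_of_sphere_diff
    (d : ℕ) (hd : 2 ≤ d) (f : EuclideanSpace ℝ (Fin d) →ₗ[ℝ] ℝ) (hf : f ≠ 0)
    (Uplus Uminus : Set (EuclideanSpace ℝ (Fin d)))
    (hneP : Uplus.Nonempty) (hconvP : Convex ℝ Uplus)
    (hconeP : ∀ x ∈ Uplus, ∀ c : ℝ, 0 < c → c • x ∈ Uplus)
    (hposP : ∀ x ∈ Uplus, 0 < f x)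
    (hneM : Uminus.Nonempty) (hconvM : Convex ℝ Uminus)
    (hconeM : ∀ x ∈ Uminus, ∀ c : ℝ, 0 < c → c • x ∈ Uminus)
    (hnegM : ∀ x ∈ Uminus, f x < 0) :
    (∃ H : ↥(sphereDiff d Uplus Uminus) × unitInterval → ↥(sphereDiff d Uplus Uminus),
      Continuous H ∧
      (∀ x : ↥(sphereDiff d Uplus Uminus), H (x, 0) = x) ∧
      (∀ x : ↥(sphereDiff d Uplus Uminus),
        (H (x, 1) : EuclideanSpace ℝ (Fin d)) ∈ equatorialSphere d f) ∧
      (∀ x : ↥(sphereDiff d Uplus Uminus),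
        (x : EuclideanSpace ℝ (Fin d)) ∈ equatorialSphere d f → H (x, 1) = x)) ∧
    Nonempty (ContinuousMap.HomotopyEquiv
      ↥(sphereDiff d Uplus Uminus) ↥(equatorialSphere d f)) := by
  classical
  obtain ⟨vP, hvP⟩ := hneP
  obtain ⟨vM, hvM⟩ := hneM
  have hfP : 0 < f vP := hposP vP hvP
  have hfM : f vM < 0 := hnegM vM hvM
  set a : EuclideanSpace ℝ (Fin d) := (f vP)⁻¹ • vP with ha
  set b : EuclideanSpace ℝ (Fin d) := (f vM)⁻¹ • vM with hb
  have hfa : f a = 1 := by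
    rw [ha, map_smul, smul_eq_mul, inv_mul_cancel₀ hfP.ne']
  have hfb : f b = 1 := by
    rw [hb, map_smul, smul_eq_mul, inv_mul_cancel₀ hfM.ne]
  -- sum closure
  have haddP : ∀ p ∈ Uplus, ∀ q ∈ Uplus, p + q ∈ Uplus := by
    intro p hp q hq
    have hmid : (1/2 : ℝ) • p + (1/2 : ℝ) • q ∈ Uplus :=
      hconvP hp hq (by norm_num : (0:ℝ) ≤ 1/2) (by norm_num : (0:ℝ) ≤ 1/2) (by norm_num)
    have := hconeP _ hmid 2 (by norm_num)
    rwa [smul_add, smul_smul, smul_smul, show (2:ℝ) * (1/2) = 1 by norm_num,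
      one_smul, one_smul] at this
  have haddM : ∀ p ∈ Uminus, ∀ q ∈ Uminus, p + q ∈ Uminus := by
    intro p hp q hq
    have hmid : (1/2 : ℝ) • p + (1/2 : ℝ) • q ∈ Uminus :=
      hconvM hp hq (by norm_num : (0:ℝ) ≤ 1/2) (by norm_num : (0:ℝ) ≤ 1/2) (by norm_num)
    have := hconeM _ hmid 2 (by norm_num)
    rwa [smul_add, smul_smul, smul_smul, show (2:ℝ) * (1/2) = 1 by norm_num,
      one_smul, one_smul] at this
  have hsa : ∀ c : ℝ, 0 < c → c • a ∈ Uplus := by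
    intro c hc
    rw [ha, smul_smul]
    exact hconeP vP hvP _ (mul_pos hc (inv_pos.mpr hfP))
  have hsb : ∀ c : ℝ, c < 0 → c • b ∈ Uminus := by
    intro c hc
    rw [hb, smul_smul]
    exact hconeM vM hvM _ (mul_pos_of_neg_of_neg hc (inv_neg''.mpr hfM))
  set G : EuclideanSpace ℝ (Fin d) → ℝ → EuclideanSpace ℝ (Fin d) :=
    fun x t => x - (t * max (f x) 0) • a - (t * min (f x) 0) • b with hG
  have hfG : ∀ x t, f (G x t) = (1 - t) * f x := by
    intro x t
    simp only [hG, map_sub, map_smul, smul_eq_mul, hfa, hfb, mul_one]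
    rcases le_or_gt (f x) 0 with h | h
    · rw [max_eq_right h, min_eq_left h]; ring
    · rw [max_eq_left h.le, min_eq_right h.le]; ring
  have hGx0 : ∀ x, G x 0 = x := by intro x; simp [hG]
  have hGeq : ∀ x t, f x = 0 → G x t = x := by
    intro x t hx; simp [hG, hx]
  -- key membership lemma
  have hKey : ∀ x, x ∈ sphereDiff d Uplus Uminus → ∀ t : ℝ, 0 ≤ t → t ≤ 1 →
      G x t ≠ 0 ∧ G x t ∉ Uplus ∧ G x t ∉ Uminus := by
    intro x hx t ht0 ht1
    obtain ⟨hxs, hxU⟩ := hx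
    have hxP : x ∉ Uplus := fun h => hxU (Or.inl h)
    have hxM : x ∉ Uminus := fun h => hxU (Or.inr h)
    have hxn : ‖x‖ = 1 := mem_sphere_zero_iff_norm.mp hxs
    have hxne : x ≠ 0 := by intro h; rw [h] at hxn; simp at hxn
    rcases lt_trichotomy (f x) 0 with hlt | heq | hgt
    · -- f x < 0
      have hGx : G x t = x - (t * f x) • b := by
        simp [hG, max_eq_right hlt.le, min_eq_left hlt.le]
      rcases eq_or_lt_of_le ht0 with ht0' | ht0'
      · rw [← ht0'] at hGx ⊢
        simp only [zero_mul, zero_smul, sub_zero] at hGx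
        rw [hGx]; exact ⟨hxne, hxP, hxM⟩
      · have hc : t * f x < 0 := mul_neg_of_pos_of_neg ht0' hlt
        have hbm : (t * f x) • b ∈ Uminus := hsb _ hc
        refine ⟨?_, ?_, ?_⟩
        · intro h0
          rw [hGx, sub_eq_zero] at h0
          exact hxM (h0 ▸ hbm)
        · intro hmem
          have : f (G x t) ≤ 0 := by
            rw [hfG]
            exact mul_nonpos_of_nonneg_of_nonpos (by linarith) hlt.le
          exact absurd (hposP _ hmem) (not_lt.mpr this)
        · intro hmem
          have : G x t + (t * f x) • b ∈ Uminus := haddM _ hmem _ hbm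
          rw [hGx, sub_add_cancel] at this
          exact hxM this
    · -- f x = 0
      rw [hGeq x t heq]; exact ⟨hxne, hxP, hxM⟩
    · -- f x > 0
      have hGx : G x t = x - (t * f x) • a := by
        simp [hG, max_eq_left hgt.le, min_eq_right hgt.le]
      rcases eq_or_lt_of_le ht0 with ht0' | ht0'
      · rw [← ht0'] at hGx ⊢
        simp only [zero_mul, zero_smul, sub_zero] at hGx
        rw [hGx]; exact ⟨hxne, hxP, hxM⟩
      · have hc : 0 < t * f x := mul_pos ht0' hgt
        have ham : (t * f x) • a ∈ Uplus := hsa _ hc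
        refine ⟨?_, ?_, ?_⟩
        · intro h0
          rw [hGx, sub_eq_zero] at h0
          exact hxP (h0 ▸ ham)
        · intro hmem
          have : G x t + (t * f x) • a ∈ Uplus := haddP _ hmem _ ham
          rw [hGx, sub_add_cancel] at this
          exact hxP this
        · intro hmem
          have : 0 ≤ f (G x t) := by
            rw [hfG]
            exact mul_nonneg (by linarith) hgt.le
          exact absurd (hnegM _ hmem) (not_lt.mpr this)
  -- the normalized map
  set N : EuclideanSpace ℝ (Fin d) → ℝ → EuclideanSpace ℝ (Fin d) :=
    fun x t => ‖G x t‖⁻¹ • G x t with hN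
  have hNmem : ∀ x, x ∈ sphereDiff d Uplus Uminus → ∀ t : ℝ, 0 ≤ t → t ≤ 1 →
      N x t ∈ sphereDiff d Uplus Uminus := by
    intro x hx t ht0 ht1
    obtain ⟨hGne, hGP, hGM⟩ := hKey x hx t ht0 ht1
    have hn : ‖G x t‖ ≠ 0 := norm_ne_zero_iff.mpr hGne
    have hnpos : 0 < ‖G x t‖ := norm_pos_iff.mpr hGne
    constructor
    · rw [mem_sphere_zero_iff_norm, hN]
      simp [norm_smul, abs_of_pos (inv_pos.mpr hnpos), inv_mul_cancel₀ hn]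
    · rintro (h | h)
      · have := hconeP _ h ‖G x t‖ hnpos
        rw [hN] at this
        rw [smul_smul, mul_inv_cancel₀ hn, one_smul] at this
        exact hGP this
      · have := hconeM _ h ‖G x t‖ hnpos
        rw [hN] at this
        rw [smul_smul, mul_inv_cancel₀ hn, one_smul] at this
        exact hGM this
  have hfc : Continuous f := f.continuous_of_finiteDimensional
  have hGc : Continuous (fun p : EuclideanSpace ℝ (Fin d) × ℝ => G p.1 p.2) := by
    apply Continuous.sub
    apply Continuous.sub continuous_fst
    · exact (continuous_snd.mul ((hfc.comp continuous_fst).max continuous_const)).smul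
        continuous_const
    · exact (continuous_snd.mul ((hfc.comp continuous_fst).min continuous_const)).smul
        continuous_const
  -- the homotopy on the subtype
  have hmemH : ∀ p : ↥(sphereDiff d Uplus Uminus) × unitInterval,
      N p.1 p.2 ∈ sphereDiff d Uplus Uminus := fun p =>
    hNmem p.1 p.1.2 p.2 p.2.2.1 p.2.2.2
  set H : ↥(sphereDiff d Uplus Uminus) × unitInterval → ↥(sphereDiff d Uplus Uminus) :=
    fun p => ⟨N p.1 p.2, hmemH p⟩ with hHdef
  have hGne' : ∀ p : ↥(sphereDiff d Uplus Uminus) × unitInterval,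
      ‖G (p.1 : EuclideanSpace ℝ (Fin d)) (p.2 : ℝ)‖ ≠ 0 := fun p =>
    norm_ne_zero_iff.mpr (hKey p.1 p.1.2 p.2 p.2.2.1 p.2.2.2).1
  have hHc : Continuous H := by
    apply Continuous.subtype_mk
    have hGc' : Continuous (fun p : ↥(sphereDiff d Uplus Uminus) × unitInterval =>
        G (p.1 : EuclideanSpace ℝ (Fin d)) (p.2 : ℝ)) :=
      hGc.comp ((continuous_subtype_val.comp continuous_fst).prodMk
        (continuous_subtype_val.comp continuous_snd))
    exact (hGc'.norm.inv₀ hGne').smul hGc'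
  have hH0 : ∀ x : ↥(sphereDiff d Uplus Uminus), H (x, 0) = x := by
    intro x
    apply Subtype.ext
    have hxn : ‖(x : EuclideanSpace ℝ (Fin d))‖ = 1 := mem_sphere_zero_iff_norm.mp x.2.1
    show N (x : EuclideanSpace ℝ (Fin d)) ((0 : unitInterval) : ℝ) =
      (x : EuclideanSpace ℝ (Fin d))
    rw [hN]
    simp only [Set.Icc.coe_zero, hGx0, hxn]
    simp
  have hH1mem : ∀ x : ↥(sphereDiff d Uplus Uminus),
      (H (x, 1) : EuclideanSpace ℝ (Fin d)) ∈ equatorialSphere d f := by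
    intro x
    constructor
    · exact (H (x, 1)).2.1
    · show f (N (x : EuclideanSpace ℝ (Fin d)) ((1 : unitInterval) : ℝ)) = 0
      rw [hN]
      simp only [Set.Icc.coe_one, map_smul, smul_eq_mul, hfG]
      ring
  have hH1fix : ∀ x : ↥(sphereDiff d Uplus Uminus),
      (x : EuclideanSpace ℝ (Fin d)) ∈ equatorialSphere d f → H (x, 1) = x := by
    intro x hx
    apply Subtype.ext
    show N (x : EuclideanSpace ℝ (Fin d)) ((1 : unitInterval) : ℝ) =
      (x : EuclideanSpace ℝ (Fin d))
    have hxn : ‖(x : EuclideanSpace ℝ (Fin d))‖ = 1 := mem_sphere_zero_iff_norm.mp x.2.1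
    rw [hN]
    simp only [Set.Icc.coe_one, hGeq _ _ hx.2, hxn]
    simp
  refine ⟨⟨H, hHc, hH0, hH1mem, hH1fix⟩, ?_⟩
  -- homotopy equivalence
  have hsub : equatorialSphere d f ⊆ sphereDiff d Uplus Uminus := by
    rintro x ⟨hxs, hxf⟩
    refine ⟨hxs, ?_⟩
    rintro (h | h)
    · exact absurd hxf (hposP _ h).ne'
    · exact absurd hxf (hnegM _ h).ne
  set r : C(↥(sphereDiff d Uplus Uminus), ↥(equatorialSphere d f)) :=
    ⟨fun x => ⟨(H (x, 1) : EuclideanSpace ℝ (Fin d)), hH1mem x⟩, by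
      apply Continuous.subtype_mk
      exact continuous_subtype_val.comp (hHc.comp (Continuous.prodMk continuous_id
        continuous_const))⟩ with hr
  set i : C(↥(equatorialSphere d f), ↥(sphereDiff d Uplus Uminus)) :=
    ⟨Set.inclusion hsub, continuous_inclusion hsub⟩ with hi
  have hri : r.comp i = ContinuousMap.id _ := by
    apply ContinuousMap.ext
    intro x
    have h1 := hH1fix ⟨(x : EuclideanSpace ℝ (Fin d)), hsub x.2⟩ x.2
    have h2 : (H (⟨(x : EuclideanSpace ℝ (Fin d)), hsub x.2⟩, 1) : EuclideanSpace ℝ (Fin d))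
        = (x : EuclideanSpace ℝ (Fin d)) := congrArg Subtype.val h1
    exact Subtype.ext h2
  have hir : (ContinuousMap.id ↥(sphereDiff d Uplus Uminus)).Homotopy (i.comp r) := by
    refine ⟨⟨fun p => H (p.2, p.1), ?_⟩, ?_, ?_⟩
    · exact hHc.comp (continuous_snd.prodMk continuous_fst)
    · intro x; exact hH0 x
    · intro x; rfl
  exact ⟨⟨r, i, ⟨hir.symm⟩, hri ▸ ContinuousMap.Homotopic.refl _⟩⟩
end
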